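/- arXiv:2507.13898 — 6 statements merged into one kernel-verified Lean document; each statement's English description precedes it below -/
import Mathlib

section
/- Let $f_n \in C([a,b])$ be a sequence of continuous, monotone increasing, uniformly bounded functions converging pointwise to a continuous function $f$ on $[a,b]$, and let $\alpha_n$ be a sequence of uniformly bounded increasing functions on $[a,b]$ converging to an increasing function $\alpha$ at $a$, at $b$, and at all but countably many points of $(a,b)$. Then the Riemann–Stieltjes integrals converge: $\int_a^b f_n\, d\alpha_n \to \int_a^b f\, d\alpha$. -/
open Set Filter

set_option maxHeartbeats 1000000

/-- The Riemann–Stieltjes sum of `f` with respect to the integrator `α`, for the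
tagged partition given by points `x 0 ≤ x 1 ≤ ⋯ ≤ x n` and tags `ξ i ∈ [x i, x (i+1)]`. -/
def RSSum (f α : ℝ → ℝ) (n : ℕ) (x ξ : ℕ → ℝ) : ℝ :=
  ∑ i ∈ Finset.range n, f (ξ i) * (α (x (i + 1)) - α (x i))

/-- `x, ξ` is a tagged partition of `[a, b]` with `n` subintervals of mesh `< δ`. -/
def IsTaggedPartition (a b δ : ℝ) (n : ℕ) (x ξ : ℕ → ℝ) : Prop :=
  x 0 = a ∧ x n = b ∧ (∀ i < n, x i ≤ x (i + 1)) ∧ (∀ i < n, x (i + 1) - x i < δ) ∧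
    ∀ i < n, ξ i ∈ Set.Icc (x i) (x (i + 1))

/-- `I` is the Riemann–Stieltjes integral `∫_a^b f dα`. -/
def IsRSIntegral (f α : ℝ → ℝ) (a b : ℝ) (I : ℝ) : Prop :=
  ∀ ε > 0, ∃ δ > 0, ∀ (n : ℕ) (x ξ : ℕ → ℝ),
    IsTaggedPartition a b δ n x ξ → |RSSum f α n x ξ - I| < ε


lemma chain_mono {x : ℕ → ℝ} {m : ℕ} (h : ∀ i < m, x i ≤ x (i + 1)) :
    ∀ j ≤ m, ∀ i ≤ j, x i ≤ x j := by
  intro j hj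
  induction j with
  | zero => intro i hi; simp [Nat.le_zero.mp hi]
  | succ j ih =>
    intro i hi
    rcases Nat.eq_or_lt_of_le hi with rfl | hlt
    · exact le_refl _
    · exact (ih (by omega) i (by omega)).trans (h j (by omega))

lemma sum_range_mul_blocks {M : Type*} [AddCommMonoid M] (h : ℕ → M) (m k : ℕ) :
    ∑ j ∈ Finset.range (m * k), h j
      = ∑ i ∈ Finset.range m, ∑ l ∈ Finset.range k, h (i * k + l) := by
  induction m with
  | zero => simp
  | succ m ih =>
    rw [Nat.succ_mul, Finset.sum_range_add, ih, Finset.sum_range_succ]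

lemma exists_fine_partition (a b δ : ℝ) (hab : a < b) (hδ : 0 < δ) (E : Set ℝ)
    (hE : E.Countable) :
    ∃ m : ℕ, ∃ x : ℕ → ℝ, 0 < m ∧ x 0 = a ∧ x m = b ∧ (∀ i < m, x i ≤ x (i + 1)) ∧
      (∀ i < m, x (i + 1) - x i < δ) ∧ ∀ i, 0 < i → i < m → x i ∈ Set.Ioo a b ∧ x i ∉ E := by
  obtain ⟨m, hm1, hm2⟩ : ∃ m : ℕ, 0 < m ∧ (b - a) / m < δ / 2 := by
    obtain ⟨m, hm⟩ := exists_nat_gt ((b - a) / (δ / 2))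
    refine ⟨m + 1, Nat.succ_pos _, ?_⟩
    rw [div_lt_iff₀ (by positivity)]
    rw [div_lt_iff₀ (by positivity)] at hm
    push_cast
    nlinarith [hδ]
  set d : ℝ := (b - a) / m with hd
  have hd0 : 0 < d := div_pos (by linarith) (by exact_mod_cast hm1)
  set r : ℝ := d / 4 with hr
  have hr0 : 0 < r := by positivity
  set c : ℕ → ℝ := fun i => a + i * d with hc
  have hpick : ∀ i : ℕ, ∃ t : ℝ, (0 < i ∧ i < m) →
      t ∈ Set.Ioo (c i - r) (c i + r) ∧ t ∉ E := by
    intro i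
    by_cases h : 0 < i ∧ i < m
    · have hne : (Set.Ioo (c i - r) (c i + r)).Nonempty := Set.nonempty_Ioo.mpr (by linarith)
      obtain ⟨t, htE, ht⟩ := (hE.dense_compl ℝ).exists_mem_open isOpen_Ioo hne
      exact ⟨t, fun _ => ⟨ht, htE⟩⟩
    · exact ⟨a, fun h' => absurd h' h⟩
  set x : ℕ → ℝ := fun i => if i = 0 then a else if m ≤ i then b else (hpick i).choose with hxdef
  have hx0 : x 0 = a := by simp [hxdef]
  have hxm : x m = b := by simp [hxdef]; omega
  have hcm : c m = b := by
    simp only [hc]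
    rw [hd, mul_div_cancel₀ (b - a) (Nat.cast_ne_zero.mpr (by omega))]; ring
  have hxin : ∀ i, 0 < i → i < m → x i ∈ Set.Ioo (c i - r) (c i + r) ∧ x i ∉ E := by
    intro i hi0 him
    have : x i = (hpick i).choose := by
      simp only [hxdef]
      rw [if_neg (by omega), if_neg (by omega)]
    rw [this]
    exact (hpick i).choose_spec ⟨hi0, him⟩
  have hxbd : ∀ i ≤ m, c i - r ≤ x i ∧ x i ≤ c i + r := by
    intro i hi
    rcases Nat.eq_zero_or_pos i with rfl | hi0
    · rw [hx0]; constructor <;> simp [hc] <;> linarith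
    rcases Nat.eq_or_lt_of_le hi with rfl | him
    · rw [hxm, hcm]; constructor <;> linarith
    · have := (hxin i hi0 him).1
      exact ⟨this.1.le, this.2.le⟩
  have hcstep : ∀ i : ℕ, c (i + 1) - c i = d := by
    intro i; simp only [hc]; push_cast; ring
  refine ⟨m, x, hm1, hx0, hxm, ?_, ?_, ?_⟩
  · intro i hi
    obtain ⟨h1, h2⟩ := hxbd i (le_of_lt hi)
    obtain ⟨h3, h4⟩ := hxbd (i + 1) hi
    have := hcstep i
    linarith
  · intro i hi
    obtain ⟨h1, h2⟩ := hxbd i (le_of_lt hi)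
    obtain ⟨h3, h4⟩ := hxbd (i + 1) hi
    have := hcstep i
    linarith
  · intro i hi0 him
    obtain ⟨hio, hiE⟩ := hxin i hi0 him
    refine ⟨⟨?_, ?_⟩, hiE⟩
    · have h1 : (1 : ℝ) ≤ i := by exact_mod_cast hi0
      have : a + d ≤ c i := by
        simp only [hc]; nlinarith
      linarith [hio.1]
    · have h1 : (i : ℝ) ≤ m - 1 := by
        have : (i : ℝ) + 1 ≤ m := by exact_mod_cast him
        linarith
      have hmd : (m : ℝ) * d = b - a := by
        rw [hd, mul_div_cancel₀ (b - a) (Nat.cast_ne_zero.mpr (by omega))]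
      have : c i ≤ b - d := by
        simp only [hc]; nlinarith
      linarith [hio.2]
/-- Convergence of Riemann–Stieltjes integrals: if continuous increasing uniformly bounded
`f n → f` pointwise on `[a,b]` with `f` continuous, and uniformly bounded increasing
integrators `α n → α` at `a`, at `b` and off a countable subset of `(a,b)`,
then `∫_a^b f_n dα_n → ∫_a^b f dα`. -/
theorem rs_integral_tendsto
    (a b : ℝ) (hab : a ≤ b) (f : ℕ → ℝ → ℝ) (g : ℝ → ℝ)
    (hfc : ∀ n, ContinuousOn (f n) (Set.Icc a b))
    (hfm : ∀ n, MonotoneOn (f n) (Set.Icc a b))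
    (hfb : ∃ C, ∀ n, ∀ t ∈ Set.Icc a b, |f n t| ≤ C)
    (hfg : ∀ t ∈ Set.Icc a b, Tendsto (fun n => f n t) atTop (nhds (g t)))
    (hgc : ContinuousOn g (Set.Icc a b))
    (α : ℕ → ℝ → ℝ) (β : ℝ → ℝ)
    (hαm : ∀ n, MonotoneOn (α n) (Set.Icc a b)) (hβm : MonotoneOn β (Set.Icc a b))
    (hαb : ∃ C, ∀ n, ∀ t ∈ Set.Icc a b, |α n t| ≤ C)
    (hconva : Tendsto (fun n => α n a) atTop (nhds (β a)))
    (hconvb : Tendsto (fun n => α n b) atTop (nhds (β b)))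
    (hconv : ∃ E : Set ℝ, E.Countable ∧
      ∀ t ∈ Set.Ioo a b \ E, Tendsto (fun n => α n t) atTop (nhds (β t)))
    (I : ℕ → ℝ) (J : ℝ)
    (hI : ∀ n, IsRSIntegral (f n) (α n) a b (I n))
    (hJ : IsRSIntegral g β a b J) :
    Tendsto I atTop (nhds J) := by
  classical
  rcases eq_or_lt_of_le hab with rfl | hlt
  · -- degenerate case a = b
    have hzero : ∀ (F A : ℝ → ℝ) (K : ℝ), IsRSIntegral F A a a K → K = 0 := by
      intro F A K hK
      have habs : ∀ ε > 0, |K| < ε := by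
        intro ε hε
        obtain ⟨δ, hδ, h⟩ := hK ε hε
        have := h 0 (fun _ => a) (fun _ => a)
          ⟨rfl, rfl, by intro i hi; omega, by intro i hi; omega, by intro i hi; omega⟩
        simpa [RSSum] using this
      by_contra hK0
      exact absurd (habs |K| (abs_pos.mpr hK0)) (lt_irrefl _)
    have hIn : ∀ n, I n = 0 := fun n => hzero _ _ _ (hI n)
    have hJ0 : J = 0 := hzero _ _ _ hJ
    simp only [hJ0]
    have : I = fun _ => (0 : ℝ) := funext hIn
    rw [this]
    exact tendsto_const_nhds
  -- main case a < b
  obtain ⟨Cf, hCf⟩ := hfb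
  obtain ⟨Cα, hCα⟩ := hαb
  obtain ⟨E, hE, hEconv⟩ := hconv
  have haI : a ∈ Set.Icc a b := ⟨le_refl _, hab⟩
  have hbI : b ∈ Set.Icc a b := ⟨hab, le_refl _⟩
  have hCα0 : 0 ≤ Cα := le_trans (abs_nonneg _) (hCα 0 a haI)
  have hCf0 : 0 ≤ Cf := le_trans (abs_nonneg _) (hCf 0 a haI)
  have hg_bound : ∀ t ∈ Set.Icc a b, |g t| ≤ Cf := by
    intro t ht
    exact le_of_tendsto ((hfg t ht).abs) (Eventually.of_forall fun n => hCf n t ht)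
  rw [Metric.tendsto_atTop]
  intro ε hε
  obtain ⟨ε1, hε1def⟩ : ∃ e : ℝ, e = ε / (64 * (Cα + 1)) := ⟨_, rfl⟩
  have hε1 : 0 < ε1 := by rw [hε1def]; positivity
  -- uniform continuity of g
  obtain ⟨η, hη, hgη⟩ := Metric.uniformContinuousOn_iff.mp
    (isCompact_Icc.uniformContinuousOn_of_continuous hgc) ε1 hε1
  obtain ⟨δJ, hδJ, hJa⟩ := hJ (ε / 8) (by positivity)
  set δ' : ℝ := min δJ η with hδ'def
  have hδ' : 0 < δ' := lt_min hδJ hη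
  obtain ⟨m, x, hm, hx0, hxm, hxmono, hxmesh, hxint⟩ :=
    exists_fine_partition a b δ' hlt hδ' E hE
  have hxIcc : ∀ i ≤ m, x i ∈ Set.Icc a b := by
    intro i hi
    exact ⟨hx0 ▸ chain_mono hxmono i hi 0 (Nat.zero_le _),
      hxm ▸ chain_mono hxmono m (le_refl _) i hi⟩
  have hP : IsTaggedPartition a b δJ m x x :=
    ⟨hx0, hxm, hxmono, fun i hi => lt_of_lt_of_le (hxmesh i hi) (min_le_left _ _),
      fun i hi => ⟨le_refl _, hxmono i hi⟩⟩
  have hE1 : |RSSum g β m x x - J| < ε / 8 := hJa m x x hP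
  obtain ⟨ε2, hε2def⟩ : ∃ e : ℝ, e = ε / (32 * (m + 1) * (Cf + 1)) := ⟨_, rfl⟩
  have hε2 : 0 < ε2 := by rw [hε2def]; positivity
  -- convergence at partition points
  have hconvx : ∀ i ≤ m, Tendsto (fun n => α n (x i)) atTop (nhds (β (x i))) := by
    intro i hi
    rcases Nat.eq_zero_or_pos i with rfl | hi0
    · simpa [hx0] using hconva
    rcases Nat.eq_or_lt_of_le hi with rfl | him
    · simpa [hxm] using hconvb
    · exact hEconv (x i) ⟨(hxint i hi0 him).1, (hxint i hi0 him).2⟩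
  have hev1 : ∀ᶠ n in atTop, ∀ i ∈ Finset.range (m + 1), |f n (x i) - g (x i)| < ε1 := by
    rw [eventually_all_finset]
    intro i hi
    have h2 : Tendsto (fun n => |f n (x i) - g (x i)|) atTop (nhds 0) := by
      have := (hfg (x i) (hxIcc i (by simpa [Nat.lt_succ_iff] using hi))).sub_const (g (x i))
      simpa using this.abs
    exact h2.eventually_lt_const hε1
  have hev2 : ∀ᶠ n in atTop, ∀ i ∈ Finset.range (m + 1), |α n (x i) - β (x i)| < ε2 := by
    rw [eventually_all_finset]
    intro i hi
    have h2 : Tendsto (fun n => |α n (x i) - β (x i)|) atTop (nhds 0) := by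
      have := (hconvx i (by simpa [Nat.lt_succ_iff] using hi)).sub_const (β (x i))
      simpa using this.abs
    exact h2.eventually_lt_const hε2
  obtain ⟨N, hN⟩ := eventually_atTop.mp (hev1.and hev2)
  refine ⟨N, fun n hn => ?_⟩
  obtain ⟨hn1, hn2⟩ := hN n hn
  have hn1' : ∀ i ≤ m, |f n (x i) - g (x i)| < ε1 :=
    fun i hi => hn1 i (Finset.mem_range.mpr (Nat.lt_succ_of_le hi))
  have hn2' : ∀ i ≤ m, |α n (x i) - β (x i)| < ε2 :=
    fun i hi => hn2 i (Finset.mem_range.mpr (Nat.lt_succ_of_le hi))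
  -- refinement for this n
  obtain ⟨δn, hδn, hIa⟩ := hI n (ε / 8) (by positivity)
  set k : ℕ := ⌈δ' / δn⌉₊ + 1 with hkdef
  have hk : 0 < k := Nat.succ_pos _
  have hk0 : (0 : ℝ) < k := by exact_mod_cast hk
  have hkδ : δ' / k < δn := by
    rw [div_lt_iff₀ hk0]
    have h1 : δ' / δn ≤ (⌈δ' / δn⌉₊ : ℝ) := Nat.le_ceil _
    have h2 : ((⌈δ' / δn⌉₊ : ℕ) : ℝ) < k := by exact_mod_cast Nat.lt_succ_self _
    rw [div_le_iff₀ hδn] at h1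
    nlinarith
  obtain ⟨z, hzdef⟩ : ∃ z : ℕ → ℕ → ℝ, ∀ i l,
      z i l = x i + (l : ℝ) * ((x (i + 1) - x i) / k) := ⟨_, fun i l => rfl⟩
  obtain ⟨y, hydef⟩ : ∃ y : ℕ → ℝ, ∀ j,
      y j = x (j / k) + ((j % k : ℕ) : ℝ) * ((x (j / k + 1) - x (j / k)) / k) :=
    ⟨_, fun j => rfl⟩
  have hz0 : ∀ i, z i 0 = x i := by intro i; rw [hzdef]; simp
  have hzk : ∀ i, z i k = x (i + 1) := by
    intro i
    rw [hzdef]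
    field_simp
    ring
  have hy1 : ∀ i l, l < k → y (i * k + l) = z i l := by
    intro i l hl
    have hdiv : (i * k + l) / k = i := by
      rw [Nat.add_comm, Nat.add_mul_div_right _ _ hk, Nat.div_eq_of_lt hl, Nat.zero_add]
    have hmod : (i * k + l) % k = l := by
      rw [Nat.add_comm, Nat.add_mul_mod_self_right, Nat.mod_eq_of_lt hl]
    rw [hydef, hzdef, hdiv, hmod]
  have hyz : ∀ i, ∀ l ≤ k, y (i * k + l) = z i l := by
    intro i l hl
    rcases Nat.eq_or_lt_of_le hl with rfl | hl'
    · rw [show i * k + k = (i + 1) * k + 0 by ring, hy1 (i + 1) 0 hk, hz0, hzk]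
    · exact hy1 i l hl'
  have hy0 : y 0 = a := by
    rw [show (0 : ℕ) = 0 * k + 0 by ring, hy1 0 0 hk, hz0, hx0]
  have hymk : y (m * k) = b := by
    rw [show m * k = m * k + 0 by ring, hy1 m 0 hk, hz0, hxm]
  -- step of z
  have hzstep : ∀ i l, z i (l + 1) - z i l = (x (i + 1) - x i) / k := by
    intro i l
    rw [hzdef, hzdef]
    push_cast
    ring
  have hzmemIcc : ∀ i < m, ∀ l ≤ k, z i l ∈ Set.Icc (x i) (x (i + 1)) := by
    intro i hi l hl
    have hΔ : 0 ≤ x (i + 1) - x i := by linarith [hxmono i hi]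
    constructor
    · have : 0 ≤ (l : ℝ) * ((x (i + 1) - x i) / k) :=
        mul_nonneg (Nat.cast_nonneg _) (div_nonneg hΔ hk0.le)
      simp only [hzdef]; linarith
    · have hlk : (l : ℝ) ≤ k := by exact_mod_cast hl
      have h1 : (l : ℝ) * ((x (i + 1) - x i) / k) ≤ (k : ℝ) * ((x (i + 1) - x i) / k) :=
        mul_le_mul_of_nonneg_right hlk (div_nonneg hΔ hk0.le)
      have h2 : (k : ℝ) * ((x (i + 1) - x i) / k) = x (i + 1) - x i := by field_simp
      rw [hzdef]; linarith
  have hzIcc : ∀ i < m, ∀ l ≤ k, z i l ∈ Set.Icc a b := by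
    intro i hi l hl
    obtain ⟨h1, h2⟩ := hzmemIcc i hi l hl
    exact ⟨(hxIcc i hi.le).1.trans h1, h2.trans (hxIcc (i + 1) hi).2⟩
  have hyj : ∀ j < m * k, y j = z (j / k) (j % k) ∧ y (j + 1) = z (j / k) (j % k + 1)
      ∧ j / k < m ∧ j % k < k := by
    intro j hj
    have hjd : j / k < m := (Nat.div_lt_iff_lt_mul hk).mpr hj
    have hjm : j % k < k := Nat.mod_lt _ hk
    have hje : j = (j / k) * k + (j % k) := by
      rw [Nat.mul_comm]; exact (Nat.div_add_mod j k).symm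
    refine ⟨?_, ?_, hjd, hjm⟩
    · conv_lhs => rw [hje]
      exact hy1 _ _ hjm
    · conv_lhs => rw [hje]
      rw [show (j / k) * k + (j % k) + 1 = (j / k) * k + (j % k + 1) by ring]
      exact hyz _ _ hjm
  have hymono : ∀ j < m * k, y j ≤ y (j + 1) := by
    intro j hj
    obtain ⟨h1, h2, hjd, hjm⟩ := hyj j hj
    rw [h1, h2]
    have hΔ : 0 ≤ x (j / k + 1) - x (j / k) := by linarith [hxmono (j / k) hjd]
    have : 0 ≤ (x (j / k + 1) - x (j / k)) / k := div_nonneg hΔ hk0.le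
    linarith [hzstep (j / k) (j % k)]
  have hymesh : ∀ j < m * k, y (j + 1) - y j < δn := by
    intro j hj
    obtain ⟨h1, h2, hjd, hjm⟩ := hyj j hj
    rw [h1, h2, hzstep]
    have hstep := hxmesh (j / k) hjd
    have hlt2 : (x (j / k + 1) - x (j / k)) / k < δ' / k := by gcongr
    linarith [hkδ]
  have hQ : IsTaggedPartition a b δn (m * k) y y :=
    ⟨hy0, hymk, hymono, hymesh, fun j hj => ⟨le_refl _, hymono j hj⟩⟩
  have hA : |RSSum (f n) (α n) (m * k) y y - I n| < ε / 8 := hIa (m * k) y y hQ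
  -- oscillation bound on each subinterval of the coarse partition
  have hosc : ∀ i < m, ∀ s ∈ Set.Icc (x i) (x (i + 1)), |f n s - f n (x i)| ≤ 3 * ε1 := by
    intro i him s hs
    have hxi := hxIcc i him.le
    have hxi1 := hxIcc (i + 1) him
    have hsI : s ∈ Set.Icc a b := ⟨hxi.1.trans hs.1, hs.2.trans hxi1.2⟩
    have h1 : f n s ≤ f n (x (i + 1)) := hfm n hsI hxi1 hs.2
    have h2 : f n (x i) ≤ f n s := hfm n hxi hsI hs.1
    have hg1 := hn1' i him.le
    have hg2 := hn1' (i + 1) him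
    have hgg : dist (g (x (i + 1))) (g (x i)) < ε1 := by
      apply hgη _ hxi1 _ hxi
      rw [Real.dist_eq, abs_of_nonneg (by linarith [hxmono i him])]
      have hme := hxmesh i him
      have hδη : δ' ≤ η := min_le_right _ _
      linarith
    rw [Real.dist_eq] at hgg
    rw [abs_lt] at hg1 hg2 hgg
    rw [abs_le]
    constructor <;> linarith
  -- telescoping sums
  have htel : ∀ i, ∑ l ∈ Finset.range k, (α n (z i (l + 1)) - α n (z i l))
      = α n (x (i + 1)) - α n (x i) := by
    intro i
    rw [Finset.sum_range_sub (fun l => α n (z i l)) k, hzk, hz0]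
  have hblk : ∀ i < m,
      (∑ l ∈ Finset.range k,
        f n (y (i * k + l)) * (α n (y (i * k + l + 1)) - α n (y (i * k + l))))
        - f n (x i) * (α n (x (i + 1)) - α n (x i))
      = ∑ l ∈ Finset.range k,
          (f n (z i l) - f n (x i)) * (α n (z i (l + 1)) - α n (z i l)) := by
    intro i hi
    have hterm : ∀ l ∈ Finset.range k,
        f n (y (i * k + l)) * (α n (y (i * k + l + 1)) - α n (y (i * k + l)))
          = f n (z i l) * (α n (z i (l + 1)) - α n (z i l)) := by
      intro l hl
      rw [Finset.mem_range] at hl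
      rw [show i * k + l + 1 = i * k + (l + 1) by ring, hyz i l hl.le, hyz i (l + 1) hl]
    rw [Finset.sum_congr rfl hterm, ← htel i, Finset.mul_sum, ← Finset.sum_sub_distrib]
    exact Finset.sum_congr rfl fun l _ => by ring
  have hdiffQ : RSSum (f n) (α n) (m * k) y y - RSSum (f n) (α n) m x x
      = ∑ i ∈ Finset.range m, ∑ l ∈ Finset.range k,
          (f n (z i l) - f n (x i)) * (α n (z i (l + 1)) - α n (z i l)) := by
    rw [RSSum, RSSum, sum_range_mul_blocks
      (fun j => f n (y j) * (α n (y (j + 1)) - α n (y j))) m k, ← Finset.sum_sub_distrib]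
    exact Finset.sum_congr rfl fun i hi => hblk i (Finset.mem_range.mp hi)
  have hαab : α n b - α n a ≤ 2 * Cα := by
    have h1 := abs_le.mp (hCα n a haI)
    have h2 := abs_le.mp (hCα n b hbI)
    linarith
  have hΔz : ∀ i < m, ∀ l < k, 0 ≤ α n (z i (l + 1)) - α n (z i l) := by
    intro i hi l hl
    have h1 := hzIcc i hi l hl.le
    have h2 := hzIcc i hi (l + 1) hl
    have hΔ : 0 ≤ x (i + 1) - x i := by linarith [hxmono i hi]
    have hq : 0 ≤ (x (i + 1) - x i) / k := div_nonneg hΔ hk0.le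
    have hle : z i l ≤ z i (l + 1) := by linarith [hzstep i l]
    linarith [hαm n h1 h2 hle]
  have hΔP : ∀ i < m, 0 ≤ α n (x (i + 1)) - α n (x i) := by
    intro i hi
    linarith [hαm n (hxIcc i hi.le) (hxIcc (i + 1) hi) (hxmono i hi)]
  have htelP : ∑ i ∈ Finset.range m, (α n (x (i + 1)) - α n (x i)) = α n b - α n a := by
    rw [Finset.sum_range_sub (fun i => α n (x i)) m, hx0, hxm]
  have hB : |RSSum (f n) (α n) (m * k) y y - RSSum (f n) (α n) m x x|
      ≤ 3 * ε1 * (2 * Cα) := by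
    rw [hdiffQ]
    calc |∑ i ∈ Finset.range m, ∑ l ∈ Finset.range k,
            (f n (z i l) - f n (x i)) * (α n (z i (l + 1)) - α n (z i l))|
        ≤ ∑ i ∈ Finset.range m, |∑ l ∈ Finset.range k,
            (f n (z i l) - f n (x i)) * (α n (z i (l + 1)) - α n (z i l))| :=
          Finset.abs_sum_le_sum_abs _ _
      _ ≤ ∑ i ∈ Finset.range m, 3 * ε1 * (α n (x (i + 1)) - α n (x i)) := by
          refine Finset.sum_le_sum fun i hi => ?_
          rw [Finset.mem_range] at hi
          calc |∑ l ∈ Finset.range k,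
                  (f n (z i l) - f n (x i)) * (α n (z i (l + 1)) - α n (z i l))|
              ≤ ∑ l ∈ Finset.range k,
                  |(f n (z i l) - f n (x i)) * (α n (z i (l + 1)) - α n (z i l))| :=
                Finset.abs_sum_le_sum_abs _ _
            _ ≤ ∑ l ∈ Finset.range k, 3 * ε1 * (α n (z i (l + 1)) - α n (z i l)) := by
                refine Finset.sum_le_sum fun l hl => ?_
                rw [Finset.mem_range] at hl
                rw [abs_mul, abs_of_nonneg (hΔz i hi l hl)]
                exact mul_le_mul_of_nonneg_right
                  (hosc i hi (z i l) (hzmemIcc i hi l hl.le)) (hΔz i hi l hl)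
            _ = 3 * ε1 * (α n (x (i + 1)) - α n (x i)) := by rw [← Finset.mul_sum, htel i]
      _ = 3 * ε1 * (α n b - α n a) := by rw [← Finset.mul_sum, htelP]
      _ ≤ 3 * ε1 * (2 * Cα) := by
          apply mul_le_mul_of_nonneg_left hαab (by positivity)
  have hC : |RSSum (f n) (α n) m x x - RSSum g (α n) m x x| ≤ ε1 * (2 * Cα) := by
    rw [RSSum, RSSum, ← Finset.sum_sub_distrib]
    have hre : ∀ i ∈ Finset.range m,
        f n (x i) * (α n (x (i + 1)) - α n (x i)) - g (x i) * (α n (x (i + 1)) - α n (x i))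
          = (f n (x i) - g (x i)) * (α n (x (i + 1)) - α n (x i)) := fun i _ => by ring
    rw [Finset.sum_congr rfl hre]
    calc |∑ i ∈ Finset.range m, (f n (x i) - g (x i)) * (α n (x (i + 1)) - α n (x i))|
        ≤ ∑ i ∈ Finset.range m, |(f n (x i) - g (x i)) * (α n (x (i + 1)) - α n (x i))| :=
          Finset.abs_sum_le_sum_abs _ _
      _ ≤ ∑ i ∈ Finset.range m, ε1 * (α n (x (i + 1)) - α n (x i)) := by
          refine Finset.sum_le_sum fun i hi => ?_
          rw [Finset.mem_range] at hi
          rw [abs_mul, abs_of_nonneg (hΔP i hi)]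
          exact mul_le_mul_of_nonneg_right (hn1' i hi.le).le (hΔP i hi)
      _ = ε1 * (α n b - α n a) := by rw [← Finset.mul_sum, htelP]
      _ ≤ ε1 * (2 * Cα) := mul_le_mul_of_nonneg_left hαab hε1.le
  have hD : |RSSum g (α n) m x x - RSSum g β m x x| ≤ (m : ℝ) * (Cf * (2 * ε2)) := by
    rw [RSSum, RSSum, ← Finset.sum_sub_distrib]
    have hre : ∀ i ∈ Finset.range m,
        g (x i) * (α n (x (i + 1)) - α n (x i)) - g (x i) * (β (x (i + 1)) - β (x i))
          = g (x i) * ((α n (x (i + 1)) - β (x (i + 1))) - (α n (x i) - β (x i))) :=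
      fun i _ => by ring
    rw [Finset.sum_congr rfl hre]
    calc |∑ i ∈ Finset.range m,
            g (x i) * ((α n (x (i + 1)) - β (x (i + 1))) - (α n (x i) - β (x i)))|
        ≤ ∑ i ∈ Finset.range m,
            |g (x i) * ((α n (x (i + 1)) - β (x (i + 1))) - (α n (x i) - β (x i)))| :=
          Finset.abs_sum_le_sum_abs _ _
      _ ≤ ∑ _i ∈ Finset.range m, Cf * (2 * ε2) := by
          refine Finset.sum_le_sum fun i hi => ?_
          rw [Finset.mem_range] at hi
          rw [abs_mul]
          have h1 := hn2' i hi.le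
          have h2 := hn2' (i + 1) hi
          have h3 : |(α n (x (i + 1)) - β (x (i + 1))) - (α n (x i) - β (x i))| ≤ 2 * ε2 := by
            calc |(α n (x (i + 1)) - β (x (i + 1))) - (α n (x i) - β (x i))|
                ≤ |α n (x (i + 1)) - β (x (i + 1))| + |α n (x i) - β (x i)| := abs_sub _ _
              _ ≤ 2 * ε2 := by linarith
          exact mul_le_mul (hg_bound (x i) (hxIcc i hi.le)) h3 (abs_nonneg _) hCf0
      _ = (m : ℝ) * (Cf * (2 * ε2)) := by
          rw [Finset.sum_const, Finset.card_range, nsmul_eq_mul]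
  -- final combination
  rw [Real.dist_eq]
  have t1 : |I n - J| ≤ |I n - RSSum (f n) (α n) (m * k) y y|
      + |RSSum (f n) (α n) (m * k) y y - RSSum (f n) (α n) m x x|
      + |RSSum (f n) (α n) m x x - RSSum g (α n) m x x|
      + |RSSum g (α n) m x x - RSSum g β m x x|
      + |RSSum g β m x x - J| := by
    have a1 := abs_sub_le (I n) (RSSum (f n) (α n) (m * k) y y) J
    have a2 := abs_sub_le (RSSum (f n) (α n) (m * k) y y) (RSSum (f n) (α n) m x x) J
    have a3 := abs_sub_le (RSSum (f n) (α n) m x x) (RSSum g (α n) m x x) J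
    have a4 := abs_sub_le (RSSum g (α n) m x x) (RSSum g β m x x) J
    linarith
  have hA' : |I n - RSSum (f n) (α n) (m * k) y y| < ε / 8 := by
    rw [abs_sub_comm]; exact hA
  have hBC : 3 * ε1 * (2 * Cα) + ε1 * (2 * Cα) ≤ ε / 8 := by
    have heq : 64 * (ε1 * Cα) + 64 * ε1 = ε := by
      rw [hε1def]
      field_simp
    linarith [heq, hε1.le, mul_nonneg hε1.le hCα0]
  have hD2 : (m : ℝ) * (Cf * (2 * ε2)) ≤ ε / 8 := by
    have hm0 : (0 : ℝ) ≤ m := Nat.cast_nonneg m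
    have heq : 32 * ((m : ℝ) * (Cf * ε2)) + 32 * ((m : ℝ) * ε2) + 32 * (Cf * ε2) + 32 * ε2
        = ε := by
      rw [hε2def]
      field_simp
      ring
    linarith [heq, hε2.le, mul_nonneg hm0 (mul_nonneg hCf0 hε2.le),
      mul_nonneg hm0 hε2.le, mul_nonneg hCf0 hε2.le]
  linarith
end

section
/- Let $f$ be continuous on $[a,b]$ and let $\alpha, \beta$ be increasing functions on $[a,b]$ that agree at $a$, at $b$, and at all but countably many points of $(a,b)$. Then $\int_a^b f\, d\alpha = \int_a^b f\, d\beta$. -/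
open Set Filter

theorem tp_mono {a b δ δ' : ℝ} {n : ℕ} {x ξ : ℕ → ℝ} (h : IsTaggedPartition a b δ n x ξ)
    (hδ : δ ≤ δ') : IsTaggedPartition a b δ' n x ξ :=
  ⟨h.1, h.2.1, h.2.2.1, fun i hi => lt_of_lt_of_le (h.2.2.2.1 i hi) hδ, h.2.2.2.2⟩


/-- If `f` is continuous on `[a,b]` and the increasing integrators `α, β` agree at `a`, at `b`,
and off a countable subset of `(a,b)`, then `∫_a^b f dα = ∫_a^b f dβ`. -/
theorem rs_integral_eq_of_ae_eq_integrator
    (a b : ℝ) (hab : a ≤ b) (f α β : ℝ → ℝ)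
    (hf : ContinuousOn f (Set.Icc a b))
    (hα : MonotoneOn α (Set.Icc a b)) (hβ : MonotoneOn β (Set.Icc a b))
    (ha : α a = β a) (hb : α b = β b)
    (hcount : Set.Countable {t ∈ Set.Ioo a b | α t ≠ β t})
    (I J : ℝ) (hI : IsRSIntegral f α a b I) (hJ : IsRSIntegral f β a b J) :
    I = J := by
  have key : ∀ ε > 0, |I - J| < 2 * ε := by
    intro ε hε
    obtain ⟨δ₁, hδ₁, H₁⟩ := hI ε hε
    obtain ⟨δ₂, hδ₂, H₂⟩ := hJ ε hε
    have hδ : (0:ℝ) < min δ₁ δ₂ := lt_min hδ₁ hδ₂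
    obtain ⟨n, x, hpart, hsum⟩ : ∃ (n : ℕ) (x : ℕ → ℝ),
        IsTaggedPartition a b (min δ₁ δ₂) n x x ∧
          RSSum f α n x x = RSSum f β n x x := by
      rcases eq_or_lt_of_le hab with heq | hlt
      · exact ⟨0, fun _ => a, ⟨rfl, heq, fun i hi => absurd hi (Nat.not_lt_zero i),
          fun i hi => absurd hi (Nat.not_lt_zero i),
          fun i hi => absurd hi (Nat.not_lt_zero i)⟩, rfl⟩
      set δ := min δ₁ δ₂
      -- choose n with 3(b-a)/(2n) < δ
      obtain ⟨n, hn⟩ := exists_nat_gt (3 * (b - a) / (2 * δ))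
      have hnpos : 0 < (n:ℝ) := by
        have h0 : 0 < 3 * (b - a) / (2 * δ) := by
          apply div_pos <;> linarith
        linarith
      have hn0 : 0 < n := by exact_mod_cast hnpos
      have hmesh : (b - a) / n + (b - a) / (2 * n) < δ := by
        rw [div_lt_iff₀ (by linarith)] at hn
        rw [div_add_div _ _ (ne_of_gt hnpos) (by positivity)]
        rw [div_lt_iff₀ (by positivity)]
        ring_nf
        ring_nf at hn
        nlinarith
      set h : ℝ := (b - a) / (2 * n) with hh
      have hhpos : 0 < h := by
        rw [hh]; apply div_pos <;> linarith
      have hnne : (n:ℝ) ≠ 0 := ne_of_gt hnpos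
      set y : ℕ → ℝ := fun i => a + i * ((b - a) / n) with hy
      have hystep : ∀ i : ℕ, y (i + 1) - y i = (b - a) / n := by
        intro i; simp only [hy]; push_cast; ring
      have hdense : Dense {t : ℝ | t ∉ {t ∈ Set.Ioo a b | α t ≠ β t}} := by
        have := hcount.dense_compl ℝ
        simpa [Set.compl_def] using this
      have hpick : ∀ i : ℕ, ∃ t, t ∈ Set.Ioo (y i) (y i + h) ∧
          t ∉ {t ∈ Set.Ioo a b | α t ≠ β t} := by
        intro i
        have hne2 : (Set.Ioo (y i) (y i + h)).Nonempty :=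
          Set.nonempty_Ioo.2 (by linarith)
        obtain ⟨t, hts, ht⟩ := hdense.exists_mem_open isOpen_Ioo hne2
        exact ⟨t, ht, hts⟩
      choose p hp1 hp2 using hpick
      set x : ℕ → ℝ := fun i => if i = 0 then a else if n ≤ i then b else p i with hx
      clear_value δ h y x
      have hbox : ∀ i ≤ n, y i ≤ x i ∧ x i < y i + h := by
        intro i hi
        rcases Nat.eq_zero_or_pos i with rfl | hi0
        · simp [hx, hy, hhpos]
        rcases eq_or_lt_of_le hi with rfl | hilt
        · have hxi : x i = b := by simp [hx, hi0.ne']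
          have hyn : y i = b := by
            simp only [hy]; field_simp; ring
          rw [hxi, hyn]
          exact ⟨le_refl _, by linarith⟩
        · have hxi : x i = p i := by
            simp [hx, hi0.ne', not_le.mpr hilt]
          rw [hxi]
          exact ⟨le_of_lt (hp1 i).1, (hp1 i).2⟩
      have hstep : ∀ i < n, x i ≤ x (i + 1) ∧ x (i + 1) - x i < δ := by
        intro i hi
        obtain ⟨l1, l2⟩ := hbox i (le_of_lt hi)
        obtain ⟨r1, r2⟩ := hbox (i + 1) hi
        have hys := hystep i
        have hhle : h ≤ (b - a) / n := by
          rw [hh, div_le_div_iff₀ (by positivity) hnpos]; nlinarith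
        constructor
        · linarith
        · linarith
      have hagree : ∀ i ≤ n, α (x i) = β (x i) := by
        intro i hi
        rcases Nat.eq_zero_or_pos i with rfl | hi0
        · simpa [hx] using ha
        rcases eq_or_lt_of_le hi with rfl | hilt
        · have hxi : x i = b := by simp [hx, hi0.ne']
          rw [hxi]; exact hb
        · have hxi : x i = p i := by simp [hx, hi0.ne', not_le.mpr hilt]
          have hmem : p i ∈ Set.Ioo a b := by
            have h1 : y 1 ≤ y i := by
              simp only [hy]
              have : (1:ℝ) ≤ i := by exact_mod_cast hi0
              have hpos : 0 ≤ (b - a) / n := le_of_lt (div_pos (by linarith) hnpos)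
              nlinarith
            have h2 : y i + h ≤ y n := by
              have : y (i + 1) ≤ y n := by
                simp only [hy]
                have : ((i:ℝ) + 1) ≤ n := by exact_mod_cast hilt
                have hpos : 0 ≤ (b - a) / n := le_of_lt (div_pos (by linarith) hnpos)
                push_cast
                nlinarith
              have hys := hystep i
              have hhle : h ≤ (b - a) / n := by
                rw [hh, div_le_div_iff₀ (by positivity) hnpos]; nlinarith
              linarith
            have hy1 : a < y 1 := by
              simp only [hy]; push_cast
              have : 0 < (b - a) / n := div_pos (by linarith) hnpos
              linarith
            have hyn : y n = b := by
              simp only [hy]; field_simp; ring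
            constructor
            · exact lt_of_lt_of_le hy1 (le_trans h1 (le_of_lt (hp1 i).1))
            · calc p i < y i + h := (hp1 i).2
                _ ≤ y n := h2
                _ = b := hyn
          rw [hxi]
          by_contra hne
          exact hp2 i ⟨hmem, hne⟩
      have hx0 : x 0 = a := by simp [hx]
      have hxn : x n = b := by simp [hx, hn0.ne']
      refine ⟨n, x, ⟨hx0, hxn, fun i hi => (hstep i hi).1, fun i hi => (hstep i hi).2,
        fun i hi => ⟨le_refl _, (hstep i hi).1⟩⟩, ?_⟩
      unfold RSSum
      apply Finset.sum_congr rfl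
      intro i hi
      rw [Finset.mem_range] at hi
      rw [hagree i (le_of_lt hi), hagree (i + 1) hi]
    have e1 := H₁ n x x (tp_mono hpart (min_le_left _ _))
    have e2 := H₂ n x x (tp_mono hpart (min_le_right _ _))
    rw [hsum] at e1
    have t1 : |I - J| ≤ |RSSum f β n x x - I| + |RSSum f β n x x - J| := by
      have := abs_sub (RSSum f β n x x - I) (RSSum f β n x x - J)
      calc |I - J| = |(RSSum f β n x x - J) - (RSSum f β n x x - I)| := by ring_nf
        _ ≤ |RSSum f β n x x - J| + |RSSum f β n x x - I| := abs_sub _ _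
        _ = _ := by ring
    linarith
  by_contra hne
  have hpos : 0 < |I - J| := abs_pos.2 (sub_ne_zero.2 hne)
  have := key (|I - J| / 4) (by linarith)
  linarith
end

section
/- Let $(R,\mathfrak m)$ be a Noetherian local ring, $\bar R$ a quotient of $R$ of finite length, and $g \in \mathfrak m$. Then the function $n \mapsto \ell(\bar R / g^n \bar R)$ is concave on $\mathbb{N}$, i.e. $2\,\ell(\bar R/g^{n}\bar R) \ge \ell(\bar R/g^{n+1}\bar R) + \ell(\bar R/g^{n-1}\bar R)$ for all $n \ge 1$. -/
/-- The length of a module: the Krull dimension of its lattice of submodules,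
i.e. the supremum of the lengths of strictly increasing chains of submodules. -/
noncomputable def moduleLength (R M : Type*) [Ring R] [AddCommGroup M] [Module R M] :
    WithBot ℕ∞ :=
  Order.krullDim (Submodule R M)


lemma my_height_add_one_le {α : Type*} [Preorder α] {x y : α} (h : x < y) :
    Order.height x + 1 ≤ Order.height y := by
  rcases eq_or_ne (Order.height x) ⊤ with hx | hx
  · have hle : Order.height x ≤ Order.height y := Order.height_mono h.le
    rw [hx] at hle ⊢
    rw [top_le_iff.mp hle]
    simp
  · have hlt : Order.height x < Order.height y :=
      Order.height_strictMono h (lt_top_iff_ne_top.mpr hx)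
    exact Order.add_one_le_of_lt hlt

lemma my_claim {α : Type*} [Lattice α] [IsModularLattice α] (a : α) (p : LTSeries α) :
    (p.length : ℕ∞) ≤
      Order.height (⟨p.last ⊓ a, inf_le_right⟩ : {x : α // x ≤ a}) +
      Order.height (⟨p.last ⊔ a, le_sup_right⟩ : {x : α // a ≤ x}) := by
  suffices H : ∀ (n : ℕ) (p : LTSeries α), p.length = n → (p.length : ℕ∞) ≤
      Order.height (⟨p.last ⊓ a, inf_le_right⟩ : {x : α // x ≤ a}) +
      Order.height (⟨p.last ⊔ a, le_sup_right⟩ : {x : α // a ≤ x}) from H _ p rfl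
  intro n
  induction n with
  | zero => intro p hn; simp [hn]
  | succ n ih =>
    intro p hn
    rw [hn]
    have h0 : p.length ≠ 0 := by omega
    have hstep : p.eraseLast.last < p.last := p.eraseLast_last_rel_last h0
    have hlen : p.eraseLast.length = n := by simp [hn]
    have IH' := ih p.eraseLast hlen
    rw [hlen] at IH'
    have IH := IH'
    set x := p.eraseLast.last with hx
    set y := p.last with hy
    by_cases hinf : x ⊓ a < y ⊓ a
    · have h1 : Order.height (⟨x ⊓ a, inf_le_right⟩ : {x : α // x ≤ a}) + 1 ≤
          Order.height (⟨y ⊓ a, inf_le_right⟩ : {x : α // x ≤ a}) :=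
        my_height_add_one_le (Subtype.mk_lt_mk.mpr hinf)
      have h2 : Order.height (⟨x ⊔ a, le_sup_right⟩ : {x : α // a ≤ x}) ≤
          Order.height (⟨y ⊔ a, le_sup_right⟩ : {x : α // a ≤ x}) :=
        Order.height_mono (Subtype.mk_le_mk.mpr (sup_le_sup_right hstep.le a))
      calc ((n : ℕ∞) + 1) ≤ (Order.height (⟨x ⊓ a, inf_le_right⟩ : {x : α // x ≤ a}) +
              Order.height (⟨x ⊔ a, le_sup_right⟩ : {x : α // a ≤ x})) + 1 := by
            exact add_le_add_left IH 1
        _ = (Order.height (⟨x ⊓ a, inf_le_right⟩ : {x : α // x ≤ a}) + 1) +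
              Order.height (⟨x ⊔ a, le_sup_right⟩ : {x : α // a ≤ x}) := by
            ring
        _ ≤ _ := add_le_add h1 h2
    · have hle : y ⊓ a ≤ x ⊓ a :=
        le_of_eq ((inf_le_inf_right a hstep.le).lt_or_eq.resolve_left hinf).symm
      have hsup : x ⊔ a < y ⊔ a := sup_lt_sup_of_lt_of_inf_le_inf hstep hle
      have h1 : Order.height (⟨x ⊔ a, le_sup_right⟩ : {x : α // a ≤ x}) + 1 ≤
          Order.height (⟨y ⊔ a, le_sup_right⟩ : {x : α // a ≤ x}) :=
        my_height_add_one_le (Subtype.mk_lt_mk.mpr hsup)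
      have h2 : Order.height (⟨x ⊓ a, inf_le_right⟩ : {x : α // x ≤ a}) ≤
          Order.height (⟨y ⊓ a, inf_le_right⟩ : {x : α // x ≤ a}) :=
        Order.height_mono (Subtype.mk_le_mk.mpr (inf_le_inf_right a hstep.le))
      calc ((n : ℕ∞) + 1) ≤ (Order.height (⟨x ⊓ a, inf_le_right⟩ : {x : α // x ≤ a}) +
              Order.height (⟨x ⊔ a, le_sup_right⟩ : {x : α // a ≤ x})) + 1 := by
            exact add_le_add_left IH 1
        _ = Order.height (⟨x ⊓ a, inf_le_right⟩ : {x : α // x ≤ a}) +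
              (Order.height (⟨x ⊔ a, le_sup_right⟩ : {x : α // a ≤ x}) + 1) := by
            ring
        _ ≤ _ := add_le_add h2 h1

lemma my_krullDim_eq_add {α : Type*} [Lattice α] [IsModularLattice α] (a : α) :
    Order.krullDim α =
      Order.krullDim {x : α // x ≤ a} + Order.krullDim {x : α // a ≤ x} := by
  have : Nonempty α := ⟨a⟩
  have h1 : Nonempty {x : α // x ≤ a} := ⟨⟨a, le_rfl⟩⟩
  have h2 : Nonempty {x : α // a ≤ x} := ⟨⟨a, le_rfl⟩⟩
  apply le_antisymm
  · refine iSup_le fun p => ?_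
    calc (p.length : WithBot ℕ∞)
        ≤ ((Order.height (⟨p.last ⊓ a, inf_le_right⟩ : {x : α // x ≤ a}) +
            Order.height (⟨p.last ⊔ a, le_sup_right⟩ : {x : α // a ≤ x}) : ℕ∞) :
            WithBot ℕ∞) := by exact_mod_cast my_claim a p
      _ = (Order.height (⟨p.last ⊓ a, inf_le_right⟩ : {x : α // x ≤ a}) : WithBot ℕ∞) +
          (Order.height (⟨p.last ⊔ a, le_sup_right⟩ : {x : α // a ≤ x}) : WithBot ℕ∞) := by
          push_cast; rfl
      _ ≤ _ := add_le_add (Order.height_le_krullDim _) (Order.height_le_krullDim _)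
  · have hb : Order.krullDim {x : α // x ≤ a} ≤ (Order.height a : WithBot ℕ∞) := by
      refine iSup_le fun p => ?_
      have := Order.length_le_height (p := p.map Subtype.val (fun _ _ h => h))
        (x := a) (by exact p.last.2)
      exact_mod_cast this
    have hc : Order.krullDim {x : α // a ≤ x} ≤ (Order.coheight a : WithBot ℕ∞) := by
      refine iSup_le fun p => ?_
      have := Order.length_le_coheight (p := p.map Subtype.val (fun _ _ h => h))
        (x := a) (by exact p.head.2)
      exact_mod_cast this
    calc Order.krullDim {x : α // x ≤ a} + Order.krullDim {x : α // a ≤ x}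
        ≤ (Order.height a : WithBot ℕ∞) + (Order.coheight a : WithBot ℕ∞) :=
          add_le_add hb hc
      _ = ((Order.height a + Order.coheight a : ℕ∞) : WithBot ℕ∞) := by push_cast; rfl
      _ ≤ ((⨆ b : α, Order.height b + Order.coheight b : ℕ∞) : WithBot ℕ∞) := by
          exact_mod_cast le_iSup (fun b : α => Order.height b + Order.coheight b) a
      _ = Order.krullDim α := (Order.krullDim_eq_iSup_height_add_coheight_of_nonempty).symm


section ModLemmas
variable {R M N : Type*} [Ring R] [AddCommGroup M] [Module R M] [AddCommGroup N] [Module R N]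

variable {R M N : Type*} [Ring R] [AddCommGroup M] [Module R M] [AddCommGroup N] [Module R N]

lemma my_moduleLength_congr (e : M ≃ₗ[R] N) : moduleLength R M = moduleLength R N :=
  Order.krullDim_eq_of_orderIso (Submodule.orderIsoMapComap e)

lemma my_moduleLength_le_of_surjective (f : M →ₗ[R] N) (hf : Function.Surjective f) :
    moduleLength R N ≤ moduleLength R M :=
  Order.krullDim_le_of_strictMono (Submodule.comap f)
    (Monotone.strictMono_of_injective (fun _ _ h => Submodule.comap_mono h)
      (Submodule.comap_injective_of_surjective hf))

lemma my_moduleLength_map_le (f : M →ₗ[R] N) (p : Submodule R M) :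
    moduleLength R (p.map f) ≤ moduleLength R p := by
  apply my_moduleLength_le_of_surjective
    (f.restrict (p := p) (q := p.map f) (fun x hx => Submodule.mem_map_of_mem hx))
  rintro ⟨y, hy⟩
  obtain ⟨x, hx, rfl⟩ := hy
  exact ⟨⟨x, hx⟩, rfl⟩

lemma my_moduleLength_eq_add (N' : Submodule R M) :
    moduleLength R M = moduleLength R N' + moduleLength R (M ⧸ N') := by
  rw [moduleLength, moduleLength, moduleLength,
    Order.krullDim_eq_of_orderIso (Submodule.MapSubtype.orderIso N'),
    Order.krullDim_eq_of_orderIso (Submodule.comapMkQRelIso N')]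
  exact my_krullDim_eq_add N'


end ModLemmas

/-- Concavity of `n ↦ ℓ(R̄/gⁿR̄)` for a finite-length quotient `R̄ = R/I` of a Noetherian
local ring `R` and `g` in the maximal ideal: for `n ≥ 1`,
`ℓ(R̄/gⁿ⁺¹R̄) + ℓ(R̄/gⁿ⁻¹R̄) ≤ 2 ℓ(R̄/gⁿR̄)`. -/
theorem length_quotient_pow_concave
    (R : Type*) [CommRing R] [IsNoetherianRing R] [IsLocalRing R]
    (I : Ideal R) (hfin : moduleLength R (R ⧸ I) ≠ ⊤)
    (g : R) (hg : g ∈ IsLocalRing.maximalIdeal R) :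
    ∀ n : ℕ, 1 ≤ n →
      moduleLength R (R ⧸ (I ⊔ Ideal.span {g ^ (n + 1)})) +
          moduleLength R (R ⧸ (I ⊔ Ideal.span {g ^ (n - 1)})) ≤
        moduleLength R (R ⧸ (I ⊔ Ideal.span {g ^ n})) +
          moduleLength R (R ⧸ (I ⊔ Ideal.span {g ^ n})) := by
  intro n hn1
  have hn : n - 1 + 1 = n := Nat.succ_pred_eq_of_pos hn1
  set A : Ideal R := I ⊔ Ideal.span {g ^ (n + 1)} with hA
  set B : Ideal R := I ⊔ Ideal.span {g ^ n} with hB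
  set C : Ideal R := I ⊔ Ideal.span {g ^ (n - 1)} with hC
  have hpow : g ^ n = g ^ (n - 1) * g := by nth_rewrite 1 [← hn]; rw [pow_succ]
  have hAB : A ≤ B := sup_le_sup_left
    (Ideal.span_singleton_le_span_singleton.mpr ⟨g, pow_succ g n⟩) I
  have hBC : B ≤ C := sup_le_sup_left
    (Ideal.span_singleton_le_span_singleton.mpr ⟨g, by rw [← pow_succ, hn]⟩) I
  -- the multiplication-by-g map R → R⧸A
  set f : R →ₗ[R] R ⧸ A := A.mkQ.comp (LinearMap.lsmul R R g) with hf
  have hfB : B ≤ LinearMap.ker f := by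
    intro x hx
    obtain ⟨i, hi, z, hz, rfl⟩ := Submodule.mem_sup.mp hx
    obtain ⟨r, rfl⟩ := Ideal.mem_span_singleton.mp hz
    simp only [hf, LinearMap.mem_ker, LinearMap.comp_apply, LinearMap.lsmul_apply,
      smul_eq_mul, Submodule.mkQ_apply, Submodule.Quotient.mk_eq_zero]
    have : g * (i + g ^ n * r) = g * i + g ^ (n + 1) * r := by ring
    rw [this]
    exact Submodule.add_mem _ (Submodule.mem_sup_left (Ideal.mul_mem_left I g hi))
      (Submodule.mem_sup_right (Ideal.mul_mem_right r _ (Ideal.mem_span_singleton_self _)))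
  set fbar : (R ⧸ B) →ₗ[R] (R ⧸ A) := B.liftQ f hfB with hfbar
  have hmap : (Submodule.map B.mkQ C).map fbar = Submodule.map A.mkQ B := by
    rw [← Submodule.map_comp, Submodule.liftQ_mkQ]
    apply le_antisymm
    · rintro _ ⟨y, hy, rfl⟩
      obtain ⟨i, hi, z, hz, rfl⟩ := Submodule.mem_sup.mp hy
      obtain ⟨r, rfl⟩ := Ideal.mem_span_singleton.mp hz
      refine ⟨g * (i + g ^ (n - 1) * r), ?_, rfl⟩
      have : g * (i + g ^ (n - 1) * r) = g * i + g ^ n * r := by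
        rw [hpow]; ring
      rw [this]
      exact Submodule.add_mem _ (Submodule.mem_sup_left (Ideal.mul_mem_left I g hi))
        (Submodule.mem_sup_right (Ideal.mul_mem_right r _ (Ideal.mem_span_singleton_self _)))
    · rintro _ ⟨x, hx, rfl⟩
      obtain ⟨i, hi, z, hz, rfl⟩ := Submodule.mem_sup.mp hx
      obtain ⟨r, rfl⟩ := Ideal.mem_span_singleton.mp hz
      refine ⟨g ^ (n - 1) * r, Submodule.mem_sup_right
        (Ideal.mul_mem_right r _ (Ideal.mem_span_singleton_self _)), ?_⟩
      show A.mkQ (g * (g ^ (n - 1) * r)) = A.mkQ (i + g ^ n * r)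
      have h1 : g * (g ^ (n - 1) * r) = g ^ n * r := by rw [hpow]; ring
      rw [h1]
      rw [Submodule.mkQ_apply, Submodule.mkQ_apply, Submodule.Quotient.eq]
      have : g ^ n * r - (i + g ^ n * r) = -i := by ring
      rw [this]
      exact Submodule.neg_mem _ (Submodule.mem_sup_left hi)
  -- length bookkeeping
  have e1 : moduleLength R (R ⧸ A) =
      moduleLength R (Submodule.map A.mkQ B) + moduleLength R (R ⧸ B) := by
    rw [my_moduleLength_eq_add (Submodule.map A.mkQ B)]
    congr 1
    exact my_moduleLength_congr (Submodule.quotientQuotientEquivQuotient A B hAB)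
  have e2 : moduleLength R (R ⧸ B) =
      moduleLength R (Submodule.map B.mkQ C) + moduleLength R (R ⧸ C) := by
    rw [my_moduleLength_eq_add (Submodule.map B.mkQ C)]
    congr 1
    exact my_moduleLength_congr (Submodule.quotientQuotientEquivQuotient B C hBC)
  have key : moduleLength R (Submodule.map A.mkQ B) ≤
      moduleLength R (Submodule.map B.mkQ C) := by
    rw [← hmap]
    exact my_moduleLength_map_le fbar (Submodule.map B.mkQ C)
  calc moduleLength R (R ⧸ A) + moduleLength R (R ⧸ C)
      = (moduleLength R (Submodule.map A.mkQ B) + moduleLength R (R ⧸ B)) +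
        moduleLength R (R ⧸ C) := by rw [e1]
    _ ≤ (moduleLength R (Submodule.map B.mkQ C) + moduleLength R (R ⧸ B)) +
        moduleLength R (R ⧸ C) := by
        exact add_le_add_left (add_le_add_left key _) _
    _ = (moduleLength R (Submodule.map B.mkQ C) + moduleLength R (R ⧸ C)) +
        moduleLength R (R ⧸ B) := by ring
    _ = moduleLength R (R ⧸ B) + moduleLength R (R ⧸ B) := by rw [← e2, add_comm]
end

section
/- Let $(R,\mathfrak m,k)$ be a Noetherian local ring, $I, J$ ideals of $R$, and $x \in R$ a nonzerodivisor on $R/I$. Assume $\ell(R/(I,x)) < \infty$ and $\ell(R/(I,J)) < \infty$. Then $\ell(R/(I, xJ)) = \ell(R/(I,J)) + \ell(R/(I,x)) < \infty$. -/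
open Order

/-- Auxiliary: from a pair of sequences that are monotone up to `n` and such that at each
step at least one of them is strict, we can extract strict chains whose lengths add to `n`. -/
lemma exists_ltSeries_pair {β γ : Type*} [PartialOrder β] [PartialOrder γ]
    (n : ℕ) (u : ℕ → β) (v : ℕ → γ)
    (hle : ∀ i < n, u i ≤ u (i+1) ∧ v i ≤ v (i+1))
    (hlt : ∀ i < n, u i < u (i+1) ∨ v i < v (i+1)) :
    ∃ (P : LTSeries β) (Q : LTSeries γ),
      P.last = u n ∧ Q.last = v n ∧ n ≤ P.length + Q.length := by
  induction n with
  | zero => exact ⟨RelSeries.singleton _ (u 0), RelSeries.singleton _ (v 0), rfl, rfl, by simp⟩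
  | succ n ih =>
    obtain ⟨P, Q, hP, hQ, hn⟩ := ih (fun i hi => hle i (hi.trans (Nat.lt_succ_self n)))
      (fun i hi => hlt i (hi.trans (Nat.lt_succ_self n)))
    have h1 := (hle n (Nat.lt_succ_self n)).1
    have h2 := (hle n (Nat.lt_succ_self n)).2
    rcases h1.lt_or_eq with h1 | h1 <;> rcases h2.lt_or_eq with h2 | h2
    · exact ⟨P.snoc _ (hP ▸ h1), Q.snoc _ (hQ ▸ h2), RelSeries.last_snoc _ _ _,
        RelSeries.last_snoc _ _ _, by simp; omega⟩
    · exact ⟨P.snoc _ (hP ▸ h1), Q, RelSeries.last_snoc _ _ _, h2 ▸ hQ, by simp; omega⟩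
    · exact ⟨P, Q.snoc _ (hQ ▸ h2), h1 ▸ hP, RelSeries.last_snoc _ _ _, by simp; omega⟩
    · exact absurd (hlt n (Nat.lt_succ_self n)) (by simp [h1, h2])

lemma krullDim_le_subtype {α : Type*} [Lattice α] [IsModularLattice α] (a : α) :
    krullDim α ≤ krullDim {b // b ≤ a} + krullDim {b // a ≤ b} := by
  have : Nonempty α := ⟨a⟩
  have n1 : Nonempty {b // b ≤ a} := ⟨⟨a, le_rfl⟩⟩
  have n2 : Nonempty {b // a ≤ b} := ⟨⟨a, le_rfl⟩⟩
  rw [krullDim_eq_iSup_length, krullDim_eq_iSup_length, krullDim_eq_iSup_length,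
    ← WithBot.coe_add, WithBot.coe_le_coe]
  refine iSup_le fun p => ?_
  set n := p.length with hn
  have key : ∀ i : ℕ, min i n < n + 1 := fun i => Nat.lt_succ_of_le (min_le_right _ _)
  obtain ⟨P, Q, _, _, hPQ⟩ := exists_ltSeries_pair n
      (fun i => (⟨p ⟨min i n, key i⟩ ⊓ a, inf_le_right⟩ : {b // b ≤ a}))
      (fun i => (⟨p ⟨min i n, key i⟩ ⊔ a, le_sup_right⟩ : {b // a ≤ b}))
      (fun i hi => by
        have hmono : p ⟨min i n, key i⟩ ≤ p ⟨min (i+1) n, key (i+1)⟩ :=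
          p.monotone (by simp only [Fin.mk_le_mk]; omega)
        exact ⟨Subtype.mk_le_mk.2 (inf_le_inf_right a hmono),
          Subtype.mk_le_mk.2 (sup_le_sup_right hmono a)⟩)
      (fun i hi => by
        have hp : p ⟨min i n, key i⟩ < p ⟨min (i+1) n, key (i+1)⟩ :=
          p.strictMono (by simp only [Fin.mk_lt_mk]; omega)
        by_cases hinf : p ⟨min i n, key i⟩ ⊓ a < p ⟨min (i+1) n, key (i+1)⟩ ⊓ a
        · exact Or.inl (Subtype.mk_lt_mk.2 hinf)
        · refine Or.inr (Subtype.mk_lt_mk.2 ?_)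
          refine sup_lt_sup_of_lt_of_inf_le_inf hp (le_of_eq ?_)
          exact (((inf_le_inf_right a hp.le).lt_or_eq).resolve_left hinf).symm)
  calc (n : ℕ∞) ≤ (P.length : ℕ∞) + (Q.length : ℕ∞) := by exact_mod_cast hPQ
    _ ≤ _ := add_le_add (le_iSup (fun P : LTSeries {b // b ≤ a} => (P.length : ℕ∞)) P)
        (le_iSup (fun Q : LTSeries {b // a ≤ b} => (Q.length : ℕ∞)) Q)

lemma krullDim_subtype_add_le {α : Type*} [Lattice α] (a : α) :
    krullDim {b // b ≤ a} + krullDim {b // a ≤ b} ≤ krullDim α := by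
  have : Nonempty α := ⟨a⟩
  have n1 : Nonempty {b // b ≤ a} := ⟨⟨a, le_rfl⟩⟩
  have n2 : Nonempty {b // a ≤ b} := ⟨⟨a, le_rfl⟩⟩
  rw [krullDim_eq_iSup_length, krullDim_eq_iSup_length, krullDim_eq_iSup_length,
    ← WithBot.coe_add, WithBot.coe_le_coe]
  rw [ENat.iSup_add]
  refine iSup_le fun P => ?_
  rw [ENat.add_iSup]
  refine iSup_le fun Q => ?_
  let P' : LTSeries α := P.map Subtype.val (Subtype.strictMono_coe _)
  let Q' : LTSeries α := Q.map Subtype.val (Subtype.strictMono_coe _)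
  have hconn : P'.last ≤ Q'.head := le_trans P.last.2 Q.head.2
  rcases hconn.lt_or_eq with h | h
  · refine le_trans ?_ (le_iSup (fun p : LTSeries α => (p.length : ℕ∞)) (P'.append Q' h))
    simp only [RelSeries.append_length, P', Q', RelSeries.map_length]
    have : P.length + Q.length ≤ P.length + Q.length + 1 := Nat.le_succ _
    exact_mod_cast this
  · refine le_trans ?_ (le_iSup (fun p : LTSeries α => (p.length : ℕ∞)) (P'.smash Q' h))
    simp only [RelSeries.smash_length, P', Q', RelSeries.map_length]
    exact_mod_cast le_refl (P.length + Q.length)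

lemma moduleLength_congr {R M M₂ : Type*} [Ring R] [AddCommGroup M] [Module R M]
    [AddCommGroup M₂] [Module R M₂] (e : M ≃ₗ[R] M₂) :
    moduleLength R M = moduleLength R M₂ :=
  Order.krullDim_eq_of_orderIso (Submodule.orderIsoMapComap e)

lemma moduleLength_submodule_quotient {R M : Type*} [Ring R] [AddCommGroup M] [Module R M]
    (N : Submodule R M) :
    moduleLength R M = moduleLength R N + moduleLength R (M ⧸ N) := by
  unfold moduleLength
  rw [Order.krullDim_eq_of_orderIso (Submodule.MapSubtype.orderIso N),
    Order.krullDim_eq_of_orderIso (Submodule.comapMkQRelIso N)]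
  exact le_antisymm (krullDim_le_subtype N) (krullDim_subtype_add_le N)

lemma wb_add_ne_top {a b : WithBot ℕ∞} (ha : a ≠ ⊤) (hb : b ≠ ⊤) : a + b ≠ ⊤ := by
  cases a with
  | bot => simp
  | coe a => cases b with
    | bot => simp
    | coe b =>
      rw [← WithBot.coe_add]
      have ha' : a ≠ ⊤ := fun h => ha (by rw [h]; rfl)
      have hb' : b ≠ ⊤ := fun h => hb (by rw [h]; rfl)
      intro h
      have : a + b = ⊤ := by exact_mod_cast h
      exact (WithTop.add_ne_top.mpr ⟨ha', hb'⟩) this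


/-- Cancelling a regular element: if `x` is a nonzerodivisor on `R/I` and both
`ℓ(R/(I,x))` and `ℓ(R/(I,J))` are finite, then
`ℓ(R/(I,xJ)) = ℓ(R/(I,J)) + ℓ(R/(I,x))`, and in particular it is finite. -/
theorem length_cancel_regular_element
    (R : Type*) [CommRing R] [IsNoetherianRing R] [IsLocalRing R]
    (I J : Ideal R) (x : R)
    (hx : ∀ y : R, x * y ∈ I → y ∈ I)
    (h1 : moduleLength R (R ⧸ (I ⊔ Ideal.span {x})) ≠ ⊤)
    (h2 : moduleLength R (R ⧸ (I ⊔ J)) ≠ ⊤) :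
    moduleLength R (R ⧸ (I ⊔ Ideal.span {x} * J)) =
        moduleLength R (R ⧸ (I ⊔ J)) + moduleLength R (R ⧸ (I ⊔ Ideal.span {x})) ∧
      moduleLength R (R ⧸ (I ⊔ Ideal.span {x} * J)) ≠ ⊤ := by
  set K := I ⊔ Ideal.span {x} * J with hK
  set L := I ⊔ Ideal.span {x} with hL
  have hKL : K ≤ L := sup_le_sup_left Ideal.mul_le_left I
  let φ : R →ₗ[R] R ⧸ K := x • K.mkQ
  have hφ : ∀ r : R, φ r = Submodule.Quotient.mk (x * r) := fun r => by
    show x • K.mkQ r = _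
    rw [Submodule.mkQ_apply, ← Submodule.Quotient.mk_smul, smul_eq_mul]
  have hker : LinearMap.ker φ = I ⊔ J := by
    ext r
    rw [LinearMap.mem_ker, hφ, Submodule.Quotient.mk_eq_zero]
    constructor
    · intro h
      rw [hK, Submodule.mem_sup] at h
      obtain ⟨i, hi, s, hs, his⟩ := h
      obtain ⟨j, hj, hxj⟩ := Submodule.mem_span_singleton_mul.mp hs
      have heq : x * (r - j) = i := by rw [mul_sub, hxj, ← his]; ring
      have hrj : r - j ∈ I := hx _ (heq ▸ hi)
      exact Submodule.mem_sup.mpr ⟨r - j, hrj, j, hj, by ring⟩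
    · intro h
      rw [Submodule.mem_sup] at h
      obtain ⟨i, hi, j, hj, his⟩ := h
      rw [hK, Submodule.mem_sup]
      exact ⟨x * i, Ideal.mul_mem_left _ x hi,
        x * j, Submodule.mem_span_singleton_mul.mpr ⟨j, hj, rfl⟩, by rw [← mul_add, his]⟩
  have hrange : LinearMap.range φ = Submodule.map K.mkQ L := by
    ext b
    rw [LinearMap.mem_range]
    constructor
    · rintro ⟨r, rfl⟩
      rw [hφ]
      exact ⟨x * r,
        Submodule.mem_sup_right (Ideal.mul_mem_right r _ (Ideal.mem_span_singleton_self x)), rfl⟩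
    · rintro ⟨s, hs, rfl⟩
      simp only [SetLike.mem_coe] at hs
      rw [Submodule.mem_sup] at hs
      obtain ⟨i, hi, t, ht, rfl⟩ := hs
      obtain ⟨c, rfl⟩ := Ideal.mem_span_singleton'.mp ht
      refine ⟨c, ?_⟩
      rw [hφ, Submodule.mkQ_apply, Submodule.Quotient.eq]
      have : x * c - (i + c * x) = -i := by ring
      rw [this]
      exact K.neg_mem (Submodule.mem_sup_left hi)
  have e1 : (R ⧸ (I ⊔ J)) ≃ₗ[R] LinearMap.range φ :=
    (Submodule.quotEquivOfEq _ _ hker.symm).trans φ.quotKerEquivRange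
  have e2 : ((R ⧸ K) ⧸ LinearMap.range φ) ≃ₗ[R] R ⧸ L :=
    (Submodule.quotEquivOfEq _ _ hrange).trans (Submodule.quotientQuotientEquivQuotient K L hKL)
  have key : moduleLength R (R ⧸ K) =
      moduleLength R (R ⧸ (I ⊔ J)) + moduleLength R (R ⧸ L) := by
    rw [moduleLength_submodule_quotient (LinearMap.range φ), ← moduleLength_congr e1,
      moduleLength_congr e2]
  exact ⟨key, key ▸ wb_add_ne_top h2 h1⟩
end

section
/- Let $p = 3$ and let $D$ be the kernel function of $T_1 + T_2$ over a field of characteristic $3$. For integers $0 \le i,j,k \le q$ with $q$ a power of $3$, $D(q+i, q+j, q+k) = D(q-i, j, k) + q^2 + ik + ij$, where for integer arguments $D(a,b,c) = \ell\big(k[x,y]/(x^a, y^b, (x+y)^c)\big)$. -/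
open MvPolynomial



noncomputable section Aux

variable {K : Type*} [Field K]

local notation "R" => MvPolynomial (Fin 2) K

/-- index-to-exponent map -/
def expPair (a b : ℕ) (p : Fin a × Fin b) : Fin 2 →₀ ℕ :=
  Finsupp.single 0 (p.1 : ℕ) + Finsupp.single 1 (p.2 : ℕ)

lemma expPair_apply0 (a b : ℕ) (p : Fin a × Fin b) : expPair a b p 0 = (p.1 : ℕ) := by
  simp [expPair]

lemma expPair_apply1 (a b : ℕ) (p : Fin a × Fin b) : expPair a b p 1 = (p.2 : ℕ) := by
  simp [expPair]

/-- The coefficient-extraction map. -/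
def coeffMap (a b : ℕ) : MvPolynomial (Fin 2) K →ₗ[K] (Fin a × Fin b → K) where
  toFun f := fun p => MvPolynomial.coeff (expPair a b p) f
  map_add' f g := by funext p; simp [MvPolynomial.coeff_add]
  map_smul' c f := by funext p; simp [MvPolynomial.coeff_smul, smul_eq_mul]

lemma coeffMap_surjective (a b : ℕ) : Function.Surjective (coeffMap (K := K) a b) := by
  intro v
  refine ⟨∑ p : Fin a × Fin b, MvPolynomial.monomial (expPair a b p) (v p), ?_⟩
  funext p
  have hinj : ∀ p' : Fin a × Fin b, expPair a b p' = expPair a b p → p' = p := by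
    intro p' h
    have h0 : expPair a b p' 0 = expPair a b p 0 := by rw [h]
    have h1 : expPair a b p' 1 = expPair a b p 1 := by rw [h]
    rw [expPair_apply0, expPair_apply0] at h0
    rw [expPair_apply1, expPair_apply1] at h1
    exact Prod.ext (Fin.ext h0) (Fin.ext h1)
  simp only [coeffMap, LinearMap.coe_mk, AddHom.coe_mk]
  rw [MvPolynomial.coeff_sum]
  rw [Finset.sum_eq_single p]
  · simp [MvPolynomial.coeff_monomial]
  · intro p' _ hne
    rw [MvPolynomial.coeff_monomial, if_neg]
    intro h; exact hne (hinj p' h)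
  · intro h; exact absurd (Finset.mem_univ p) h

lemma ker_coeffMap (a b : ℕ) :
    LinearMap.ker (coeffMap (K := K) a b)
      = (Ideal.span {(X 0 : R) ^ a, (X 1 : R) ^ b}).restrictScalars K := by
  ext f
  simp only [LinearMap.mem_ker, Submodule.restrictScalars_mem]
  constructor
  · intro hf
    have hcoeff : ∀ d ∈ f.support, a ≤ d 0 ∨ b ≤ d 1 := by
      intro d hd
      by_contra hcon
      push_neg at hcon
      obtain ⟨h0, h1⟩ := hcon
      have : coeffMap (K := K) a b f (⟨d 0, h0⟩, ⟨d 1, h1⟩) = 0 := by rw [hf]; rfl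
      simp only [coeffMap, LinearMap.coe_mk, AddHom.coe_mk] at this
      have hde : expPair a b (⟨d 0, h0⟩, ⟨d 1, h1⟩) = d := by
        ext i
        fin_cases i
        · simpa using (expPair_apply0 a b (⟨d 0, h0⟩, ⟨d 1, h1⟩))
        · simpa using (expPair_apply1 a b (⟨d 0, h0⟩, ⟨d 1, h1⟩))
      rw [hde] at this
      exact (MvPolynomial.mem_support_iff.mp hd) this
    have hrepr : f = ∑ d ∈ f.support, MvPolynomial.monomial d (coeff d f) :=
      (MvPolynomial.support_sum_monomial_coeff f).symm
    rw [hrepr]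
    apply Ideal.sum_mem
    intro d hd
    rcases hcoeff d hd with h | h
    · have hmon : MvPolynomial.monomial d (coeff d f)
          = MvPolynomial.monomial (d - Finsupp.single 0 a) (coeff d f) * (X 0 : R) ^ a := by
        have hd' : (d - Finsupp.single 0 a) + Finsupp.single 0 a = d := by
          ext w
          simp only [Finsupp.add_apply, Finsupp.tsub_apply, Finsupp.single_apply]
          fin_cases w <;> simp [Nat.sub_add_cancel h]
        rw [X_pow_eq_monomial, MvPolynomial.monomial_mul, mul_one, hd']
      rw [hmon]
      exact Ideal.mul_mem_left _ _ (Ideal.subset_span (by simp))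
    · have hmon : MvPolynomial.monomial d (coeff d f)
          = MvPolynomial.monomial (d - Finsupp.single 1 b) (coeff d f) * (X 1 : R) ^ b := by
        have hd' : (d - Finsupp.single 1 b) + Finsupp.single 1 b = d := by
          ext w
          simp only [Finsupp.add_apply, Finsupp.tsub_apply, Finsupp.single_apply]
          fin_cases w <;> simp [Nat.sub_add_cancel h]
        rw [X_pow_eq_monomial, MvPolynomial.monomial_mul, mul_one, hd']
      rw [hmon]
      exact Ideal.mul_mem_left _ _ (Ideal.subset_span (by simp))
  · intro hf
    rw [Ideal.mem_span_pair] at hf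
    obtain ⟨g, h, rfl⟩ := hf
    funext p
    simp only [coeffMap, LinearMap.coe_mk, AddHom.coe_mk, Pi.zero_apply]
    rw [MvPolynomial.coeff_add]
    have e0 : (X 0 : R) ^ a = MvPolynomial.monomial (Finsupp.single 0 a) 1 := X_pow_eq_monomial
    have e1 : (X 1 : R) ^ b = MvPolynomial.monomial (Finsupp.single 1 b) 1 := X_pow_eq_monomial
    have c0 : MvPolynomial.coeff (expPair a b p) (g * MvPolynomial.monomial (Finsupp.single 0 a) 1) = 0 := by
      rw [MvPolynomial.coeff_mul_monomial', if_neg]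
      intro hle
      have h' := Finsupp.single_le_iff.mp hle
      rw [expPair_apply0] at h'
      exact absurd h' (Nat.not_le.mpr p.1.isLt)
    have c1 : MvPolynomial.coeff (expPair a b p) (h * MvPolynomial.monomial (Finsupp.single 1 b) 1) = 0 := by
      rw [MvPolynomial.coeff_mul_monomial', if_neg]
      intro hle
      have h' := Finsupp.single_le_iff.mp hle
      rw [expPair_apply1] at h'
      exact absurd h' (Nat.not_le.mpr p.2.isLt)
    rw [e0, e1, c0, c1, add_zero]

end Aux

noncomputable section Aux2

variable {K : Type*} [Field K]

local notation "R" => MvPolynomial (Fin 2) K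

/-- `R⧸I` (ring quotient) is `K`-linearly equivalent to the module quotient by the
restricted-scalars submodule. -/
def quotRestrictEquiv (I : Ideal R) :
    (R ⧸ I.restrictScalars K) ≃ₗ[K] (R ⧸ I) :=
  Submodule.Quotient.restrictScalarsEquiv K (I : Submodule (MvPolynomial (Fin 2) K) (MvPolynomial (Fin 2) K))

lemma finrank_quot_restrict (I : Ideal R) :
    Module.finrank K (R ⧸ I.restrictScalars K) = Module.finrank K (R ⧸ I) :=
  (quotRestrictEquiv I).finrank_eq

lemma finrank_span_pair_monomial (a b : ℕ) :
    Module.finrank K (R ⧸ Ideal.span {(X 0 : R) ^ a, (X 1 : R) ^ b}) = a * b := by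
  rw [← finrank_quot_restrict]
  have e1 : (R ⧸ (Ideal.span {(X 0 : R) ^ a, (X 1 : R) ^ b}).restrictScalars K)
      ≃ₗ[K] (R ⧸ LinearMap.ker (coeffMap (K := K) a b)) :=
    Submodule.quotEquivOfEq _ _ (ker_coeffMap a b).symm
  have e2 := LinearMap.quotKerEquivOfSurjective _ (coeffMap_surjective (K := K) a b)
  rw [e1.finrank_eq, e2.finrank_eq, Module.finrank_fintype_fun_eq_card]
  simp [Fintype.card_prod]

lemma finiteDimensional_span_pair_monomial_restrict (a b : ℕ) :
    FiniteDimensional K (R ⧸ (Ideal.span {(X 0 : R) ^ a, (X 1 : R) ^ b}).restrictScalars K) := by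
  have e1 : (R ⧸ (Ideal.span {(X 0 : R) ^ a, (X 1 : R) ^ b}).restrictScalars K)
      ≃ₗ[K] (R ⧸ LinearMap.ker (coeffMap (K := K) a b)) :=
    Submodule.quotEquivOfEq _ _ (ker_coeffMap a b).symm
  have e2 := LinearMap.quotKerEquivOfSurjective _ (coeffMap_surjective (K := K) a b)
  exact (e1.trans e2).symm.finiteDimensional

/-- Quotients by ideals containing powers of both variables are finite dimensional. -/
lemma finiteDimensional_of_pows_mem (I : Ideal R) (m n : ℕ)
    (hxm : (X 0 : R) ^ m ∈ I) (hyn : (X 1 : R) ^ n ∈ I) :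
    FiniteDimensional K (R ⧸ I) := by
  have hle : Ideal.span {(X 0 : R) ^ m, (X 1 : R) ^ n} ≤ I := by
    rw [Ideal.span_le]
    rintro z hz
    simp only [Set.mem_insert_iff, Set.mem_singleton_iff] at hz
    rcases hz with rfl | rfl <;> assumption
  let π : (R ⧸ (Ideal.span {(X 0 : R) ^ m, (X 1 : R) ^ n}).restrictScalars K)
      →ₗ[K] (R ⧸ I.restrictScalars K) :=
    Submodule.mapQ _ _ LinearMap.id (by intro z hz; exact hle hz)
  have hπ : Function.Surjective π := by
    intro w
    obtain ⟨z, rfl⟩ := Submodule.Quotient.mk_surjective _ w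
    exact ⟨Submodule.Quotient.mk z, by simp [π, Submodule.mapQ_apply]; rfl⟩
  have fd1 : FiniteDimensional K
      (R ⧸ (Ideal.span {(X 0 : R) ^ m, (X 1 : R) ^ n}).restrictScalars K) :=
    finiteDimensional_span_pair_monomial_restrict m n
  have fd2 : FiniteDimensional K (R ⧸ I.restrictScalars K) :=
    Module.Finite.of_surjective π hπ
  exact (quotRestrictEquiv I).finiteDimensional

end Aux2

noncomputable section Aux3

variable {K : Type*} [Field K]

local notation "R" => MvPolynomial (Fin 2) K

/-- Additivity of colength along multiplication by an element:
`ℓ(R/I) = ℓ(R/(I + (f))) + ℓ(R/(I : f))`, stated with explicit descriptions of the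
sum ideal `J₁` and the colon ideal `J₂`. -/
lemma finrank_quotient_additive (I J₁ J₂ : Ideal R) (f : MvPolynomial (Fin 2) K)
    [FiniteDimensional K (R ⧸ I)]
    (h1 : J₁ = I ⊔ Ideal.span {f})
    (h2 : ∀ z, z ∈ J₂ ↔ f * z ∈ I) :
    Module.finrank K (R ⧸ I)
      = Module.finrank K (R ⧸ J₁) + Module.finrank K (R ⧸ J₂) := by
  rw [← finrank_quot_restrict I, ← finrank_quot_restrict J₁, ← finrank_quot_restrict J₂]
  have fdI : FiniteDimensional K (R ⧸ I.restrictScalars K) :=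
    (quotRestrictEquiv I).symm.finiteDimensional
  -- the projection map
  let π : (R ⧸ I.restrictScalars K) →ₗ[K] (R ⧸ J₁.restrictScalars K) :=
    Submodule.mapQ _ _ LinearMap.id
      (by intro z hz; exact h1 ▸ (Submodule.mem_sup_left hz))
  have hπ : Function.Surjective π := by
    intro w
    obtain ⟨z, rfl⟩ := Submodule.Quotient.mk_surjective _ w
    exact ⟨Submodule.Quotient.mk z, by simp [π, Submodule.mapQ_apply]⟩
  -- the multiplication-by-f map into R⧸I
  let μ : MvPolynomial (Fin 2) K →ₗ[K] (R ⧸ I.restrictScalars K) :=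
    (Submodule.mkQ _).comp (LinearMap.mulLeft K f)
  have hkerμ : LinearMap.ker μ = J₂.restrictScalars K := by
    ext z
    simp only [LinearMap.mem_ker, μ, LinearMap.comp_apply, LinearMap.mulLeft_apply,
      Submodule.mkQ_apply, Submodule.Quotient.mk_eq_zero, Submodule.restrictScalars_mem]
    exact (h2 z).symm
  have hkerπ : LinearMap.ker π = LinearMap.range μ := by
    ext w
    obtain ⟨z, rfl⟩ := Submodule.Quotient.mk_surjective _ w
    simp only [LinearMap.mem_ker, π, Submodule.mapQ_apply, LinearMap.id_coe, id_eq,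
      Submodule.Quotient.mk_eq_zero, Submodule.restrictScalars_mem, LinearMap.mem_range]
    constructor
    · intro hz
      rw [h1] at hz
      rcases Submodule.mem_sup.mp hz with ⟨u, hu, v, hv, huv⟩
      rcases Ideal.mem_span_singleton'.mp hv with ⟨s, rfl⟩
      refine ⟨s, ?_⟩
      simp only [μ, LinearMap.comp_apply, LinearMap.mulLeft_apply, Submodule.mkQ_apply]
      rw [← huv]
      rw [Submodule.Quotient.eq]
      have : f * s - (u + s * f) = -u := by ring
      rw [this]
      exact Submodule.neg_mem _ hu
    · rintro ⟨s, hs⟩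
      simp only [μ, LinearMap.comp_apply, LinearMap.mulLeft_apply, Submodule.mkQ_apply] at hs
      have : z - f * s ∈ I := by
        have := (Submodule.Quotient.eq (I.restrictScalars K)).mp hs.symm
        simpa using this
      have hz' : z = (z - f * s) + f * s := by ring
      rw [h1, hz']
      exact Submodule.add_mem _ (Submodule.mem_sup_left this)
        (Submodule.mem_sup_right (Ideal.mem_span_singleton'.mpr ⟨s, by ring⟩))
  have rn := LinearMap.finrank_range_add_finrank_ker π
  have hrange : Module.finrank K (LinearMap.range π)
      = Module.finrank K (R ⧸ J₁.restrictScalars K) := by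
    rw [LinearMap.range_eq_top.mpr hπ]
    exact finrank_top K _
  have hker : Module.finrank K (LinearMap.ker π)
      = Module.finrank K (R ⧸ J₂.restrictScalars K) := by
    rw [hkerπ, ← μ.quotKerEquivRange.finrank_eq,
      (Submodule.quotEquivOfEq _ _ hkerμ).finrank_eq]
  rw [hrange, hker] at rn
  omega

end Aux3

noncomputable section Aux4

variable {K : Type*} [Field K]

local notation "R" => MvPolynomial (Fin 2) K

/-- evaluation map sending `X 0 ↦ T`, `X 1 ↦ c • T`. -/
def evc (c : K) : MvPolynomial (Fin 2) K →ₐ[K] Polynomial K :=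
  MvPolynomial.aeval ![Polynomial.X, Polynomial.C c * Polynomial.X]

def secK : Polynomial K →ₐ[K] MvPolynomial (Fin 2) K := Polynomial.aeval (X 0)

lemma sub_sec_mem (c : K) (f : R) :
    f - secK (evc c f) ∈ Ideal.span {(X 1 : R) - C c * X 0} := by
  induction f using MvPolynomial.induction_on with
  | C a => simp [evc, secK]
  | add f g hf hg =>
    have : f + g - secK (evc c (f + g))
        = (f - secK (evc c f)) + (g - secK (evc c g)) := by
      simp only [map_add]; ring
    rw [this]; exact Ideal.add_mem _ hf hg
  | mul_X f n hf =>
    have hsx : secK (Polynomial.X) = (X 0 : R) := by simp [secK]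
    have hsc : secK (Polynomial.C c) = (C c : R) := by
      simp [secK, Polynomial.aeval_C]
    fin_cases n
    · show f * X 0 - secK (evc c (f * X 0)) ∈ Ideal.span {(X 1 : R) - C c * X 0}
      have heq : f * X 0 - secK (evc c (f * X 0))
          = (f - secK (evc c f)) * X 0 := by
        simp only [map_mul, evc, MvPolynomial.aeval_X]
        simp only [Matrix.cons_val_zero, map_mul]
        rw [show (MvPolynomial.aeval ![Polynomial.X, Polynomial.C c * Polynomial.X]) f
          = evc c f from rfl, hsx]
        ring
      rw [heq]; exact Ideal.mul_mem_right _ _ hf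
    · show f * X 1 - secK (evc c (f * X 1)) ∈ Ideal.span {(X 1 : R) - C c * X 0}
      have heq : f * X 1 - secK (evc c (f * X 1))
          = (f - secK (evc c f)) * X 1 + secK (evc c f) * ((X 1 : R) - C c * X 0) := by
        simp only [map_mul, evc, MvPolynomial.aeval_X]
        simp only [Matrix.cons_val_one, Matrix.head_cons, Matrix.cons_val_zero, map_mul]
        rw [show (MvPolynomial.aeval ![Polynomial.X, Polynomial.C c * Polynomial.X]) f
          = evc c f from rfl, hsx, hsc]
        ring
      rw [heq]
      exact Ideal.add_mem _ (Ideal.mul_mem_right _ _ hf)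
        (Ideal.mul_mem_left _ _ (Ideal.subset_span rfl))

lemma ker_evc (c : K) :
    RingHom.ker (evc c : MvPolynomial (Fin 2) K →ₐ[K] Polynomial K)
      = Ideal.span {(X 1 : R) - C c * X 0} := by
  apply le_antisymm
  · intro f hf
    have h0 : evc c f = 0 := hf
    have := sub_sec_mem c f
    rw [h0, map_zero, sub_zero] at this
    exact this
  · rw [Ideal.span_le, Set.singleton_subset_iff]
    simp only [SetLike.mem_coe, RingHom.mem_ker, map_sub, map_mul]
    simp [evc, MvPolynomial.aeval_X, MvPolynomial.aeval_C]

lemma lin_ne_zero (c : K) : ((X 1 : R) - C c * X 0) ≠ 0 := by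
  intro h
  have h2 := congrArg (MvPolynomial.aeval ![(0 : K), 1]) h
  simp only [map_sub, map_mul, MvPolynomial.aeval_X, MvPolynomial.aeval_C, map_zero] at h2
  simp [Matrix.cons_val_one, Matrix.cons_val_zero, Matrix.head_cons] at h2

lemma prime_lin (c : K) : Prime ((X 1 : R) - C c * X 0) := by
  have hprime : (Ideal.span {(X 1 : R) - C c * X 0}).IsPrime := by
    rw [← ker_evc c]
    exact RingHom.ker_isPrime _
  exact (Ideal.span_singleton_prime (lin_ne_zero c)).mp hprime

lemma prime_Y : Prime ((X 1 : R)) := by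
  have := prime_lin (0 : K)
  simpa using this

lemma prime_U : Prime ((X 0 : R) + X 1) := by
  have h := prime_lin (-1 : K)
  have : (X 1 : R) - C (-1) * X 0 = X 0 + X 1 := by
    rw [map_neg, map_one]; ring
  rwa [this] at h

lemma not_dvd_y_x : ¬ ((X 1 : R) ∣ X 0) := by
  rintro ⟨g, hg⟩
  have h2 := congrArg (MvPolynomial.aeval ![(1 : K), 0]) hg
  simp [MvPolynomial.aeval_X] at h2

lemma not_dvd_y_u : ¬ ((X 1 : R) ∣ (X 0 + X 1)) := by
  intro h
  exact not_dvd_y_x ((dvd_add_right (dvd_refl _)).mp (by rwa [add_comm] at h))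

lemma not_dvd_u_v [CharP K 3] : ¬ (((X 0 : R) + X 1) ∣ (X 0 - X 1)) := by
  rintro ⟨g, hg⟩
  have h2 := congrArg (MvPolynomial.aeval ![(1 : K), -1]) hg
  simp only [map_sub, map_add, map_mul, MvPolynomial.aeval_X] at h2
  simp only [Matrix.cons_val_zero, Matrix.cons_val_one, Matrix.head_cons] at h2
  rw [add_neg_cancel, zero_mul, sub_neg_eq_add] at h2
  have h3 : ((2 : ℕ) : K) = 0 := by push_cast; linear_combination h2
  have h4 := (CharP.cast_eq_zero_iff K 3 2).mp h3
  omega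

end Aux4

noncomputable section Aux5

variable {K : Type*} [Field K]

local notation "R" => MvPolynomial (Fin 2) K

/-- The shear automorphism `x ↦ x`, `y ↦ x + y`. -/
def shear : MvPolynomial (Fin 2) K ≃ₐ[K] MvPolynomial (Fin 2) K :=
  AlgEquiv.ofAlgHom
    (MvPolynomial.aeval ![X 0, X 0 + X 1])
    (MvPolynomial.aeval ![X 0, X 1 - X 0])
    (by
      apply MvPolynomial.algHom_ext
      intro n
      fin_cases n <;>
        simp [MvPolynomial.aeval_X, Matrix.cons_val_zero, Matrix.cons_val_one, Matrix.head_cons])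
    (by
      apply MvPolynomial.algHom_ext
      intro n
      fin_cases n <;>
        simp [MvPolynomial.aeval_X, Matrix.cons_val_zero, Matrix.cons_val_one, Matrix.head_cons])

lemma shear_X0 : (shear (K := K)) (X 0) = X 0 := by
  simp [shear, MvPolynomial.aeval_X]

lemma shear_X1 : (shear (K := K)) (X 1) = X 0 + X 1 := by
  simp [shear, MvPolynomial.aeval_X]

lemma finrank_span_x_u (i k : ℕ) :
    Module.finrank K (R ⧸ Ideal.span {(X 0 : R) ^ i, ((X 0 : R) + X 1) ^ k}) = i * k := by
  have hmap : Ideal.span {(X 0 : R) ^ i, ((X 0 : R) + X 1) ^ k}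
      = (Ideal.span {(X 0 : R) ^ i, (X 1 : R) ^ k}).map (shear (K := K) : R →+* R) := by
    rw [Ideal.map_span]
    congr 1
    rw [Set.image_insert_eq, Set.image_singleton]
    have h0 : ((shear (K := K) : R →+* R) : R → R) ((X 0 : R) ^ i) = (X 0 : R) ^ i := by
      show (shear (K := K)) ((X 0 : R) ^ i) = (X 0 : R) ^ i
      rw [map_pow, shear_X0]
    have h1 : ((shear (K := K) : R →+* R) : R → R) ((X 1 : R) ^ k) = ((X 0 : R) + X 1) ^ k := by
      show (shear (K := K)) ((X 1 : R) ^ k) = ((X 0 : R) + X 1) ^ k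
      rw [map_pow, shear_X1]
    rw [h0, h1]
  have e := Ideal.quotientEquivAlg (R₁ := K)
    (Ideal.span {(X 0 : R) ^ i, (X 1 : R) ^ k})
    (Ideal.span {(X 0 : R) ^ i, ((X 0 : R) + X 1) ^ k})
    (shear (K := K)) hmap
  rw [← e.toLinearEquiv.finrank_eq]
  exact finrank_span_pair_monomial i k

end Aux5

noncomputable section Main

variable {K : Type*} [Field K]

local notation "R" => MvPolynomial (Fin 2) K

lemma mem_span_triple {a b c z : MvPolynomial (Fin 2) K} :
    z ∈ Ideal.span ({a, b, c} : Set (MvPolynomial (Fin 2) K))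
      ↔ ∃ α β γ, z = α * a + β * b + γ * c := by
  constructor
  · intro hz
    rw [Ideal.mem_span_insert] at hz
    obtain ⟨α, z', hz', rfl⟩ := hz
    rw [Ideal.mem_span_pair] at hz'
    obtain ⟨β, γ, rfl⟩ := hz'
    exact ⟨α, β, γ, by ring⟩
  · rintro ⟨α, β, γ, rfl⟩
    have ha : a ∈ Ideal.span ({a, b, c} : Set (MvPolynomial (Fin 2) K)) :=
      Ideal.subset_span (by simp)
    have hb : b ∈ Ideal.span ({a, b, c} : Set (MvPolynomial (Fin 2) K)) :=
      Ideal.subset_span (by simp)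
    have hc : c ∈ Ideal.span ({a, b, c} : Set (MvPolynomial (Fin 2) K)) :=
      Ideal.subset_span (by simp)
    exact Ideal.add_mem _ (Ideal.add_mem _ (Ideal.mul_mem_left _ _ ha)
      (Ideal.mul_mem_left _ _ hb)) (Ideal.mul_mem_left _ _ hc)

section CharThree

variable [CharP K 3]

-- abbreviations inside proofs: x = X 0, y = X 1, u = x + y, v = x - y

lemma char3_facts (e q : ℕ) (hq : q = 3 ^ e) :
    ((X 0 : R) + X 1) ^ q = (X 0 : R) ^ q + (X 1 : R) ^ q
    ∧ ((X 0 : R) - X 1) ^ q = (X 0 : R) ^ q - (X 1 : R) ^ q := by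
  haveI : Fact (Nat.Prime 3) := ⟨by norm_num⟩
  subst hq
  constructor
  · exact add_pow_char_pow ..
  · exact sub_pow_char_pow ..

lemma three_eq_zero : ((3 : ℕ) : R) = 0 := by
  haveI : CharP R 3 := inferInstance
  exact CharP.cast_eq_zero R 3


lemma colon_A (e q : ℕ) (hq : q = 3 ^ e) (i j : ℕ) (hi : i ≤ q) (hj : j ≤ q) (z : R) :
    z ∈ Ideal.span {(X 0 : R) ^ i, (X 1 : R) ^ j}
      ↔ (X 0 : R) ^ q * z ∈ Ideal.span
          {(X 0 : R) ^ (q + i), (X 1 : R) ^ (q + j), ((X 0 : R) + X 1) ^ q} := by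
  obtain ⟨hu, hv⟩ := char3_facts (K := K) e q hq
  have hxqi : (X 0 : R) ^ (q + i) = X 0 ^ q * X 0 ^ i := pow_add _ _ _
  have hyqj : (X 1 : R) ^ (q + j) = X 1 ^ q * X 1 ^ j := pow_add _ _ _
  have hxqi' : (X 0 : R) ^ (q - i) * X 0 ^ i = X 0 ^ q := by
    rw [← pow_add, Nat.sub_add_cancel hi]
  have hyqj' : (X 1 : R) ^ (q - j) * X 1 ^ j = X 1 ^ q := by
    rw [← pow_add, Nat.sub_add_cancel hj]
  constructor
  · intro hz
    rw [Ideal.mem_span_pair] at hz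
    obtain ⟨α, β, rfl⟩ := hz
    refine mem_span_triple.mpr ⟨α, -β, β * X 1 ^ j, ?_⟩
    rw [hxqi, hyqj, hu]
    ring
  · intro hz
    obtain ⟨α, β, γ, hrep⟩ := mem_span_triple.mp hz
    -- w := z - α * x^i satisfies x^q * w = β y^{q+j} + γ u^q
    have hw : (X 0 : R) ^ q * (z - α * X 0 ^ i)
        = β * (X 1 ^ q * X 1 ^ j) + γ * ((X 0 : R) + X 1) ^ q := by
      rw [← hyqj]
      linear_combination hrep - α * hxqi
    -- key divisibility: u^q (w - γ) = y^q (w + β y^j)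
    have hkey : ((X 0 : R) + X 1) ^ q * ((z - α * X 0 ^ i) - γ)
        = (X 1 : R) ^ q * ((z - α * X 0 ^ i) + β * X 1 ^ j) := by
      linear_combination hw + (z - α * X 0 ^ i) * hu
    have hyprime : Prime ((X 1 : R)) := prime_Y
    have hndvd : ¬ ((X 1 : R) ∣ ((X 0 : R) + X 1) ^ q) := by
      intro hd
      exact not_dvd_y_u (hyprime.dvd_of_dvd_pow hd)
    have hdvd : (X 1 : R) ^ q ∣ ((X 0 : R) + X 1) ^ q * ((z - α * X 0 ^ i) - γ) :=
      ⟨(z - α * X 0 ^ i) + β * X 1 ^ j, hkey⟩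
    have hdvd2 : (X 1 : R) ^ q ∣ ((z - α * X 0 ^ i) - γ) :=
      hyprime.pow_dvd_of_dvd_mul_left q hndvd hdvd
    obtain ⟨δ, hδ⟩ := hdvd2
    have hyne : ((X 1 : R)) ^ q ≠ 0 := pow_ne_zero _ hyprime.ne_zero
    have hcancel : (z - α * X 0 ^ i) + β * X 1 ^ j = ((X 0 : R) + X 1) ^ q * δ := by
      apply mul_left_cancel₀ hyne
      calc (X 1 : R) ^ q * ((z - α * X 0 ^ i) + β * X 1 ^ j)
          = ((X 0 : R) + X 1) ^ q * ((z - α * X 0 ^ i) - γ) := hkey.symm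
        _ = ((X 0 : R) + X 1) ^ q * ((X 1 : R) ^ q * δ) := by rw [hδ]
        _ = (X 1 : R) ^ q * (((X 0 : R) + X 1) ^ q * δ) := by ring
    -- so z = (α + x^{q-i} δ) x^i + (y^{q-j} δ - β) y^j
    refine Ideal.mem_span_pair.mpr
      ⟨α + (X 0 : R) ^ (q - i) * δ, (X 1 : R) ^ (q - j) * δ - β, ?_⟩
    linear_combination -hcancel + δ * hxqi' + δ * hyqj' - δ * hu


lemma colon_I (e q : ℕ) (hq : q = 3 ^ e) (i j k : ℕ) (hi : i ≤ q) (hj : j ≤ q) (hk : k ≤ q)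
    (z : R) :
    z ∈ Ideal.span {((X 0 : R) - X 1) ^ q, (X 0 : R) ^ i * (X 1 : R) ^ j, ((X 0 : R) + X 1) ^ k}
      ↔ ((X 0 : R) + X 1) ^ q * z ∈ Ideal.span
          {(X 0 : R) ^ (q + i), (X 1 : R) ^ (q + j), ((X 0 : R) + X 1) ^ (q + k)} := by
  obtain ⟨hu, hv⟩ := char3_facts (K := K) e q hq
  have hxqi : (X 0 : R) ^ (q + i) = X 0 ^ q * X 0 ^ i := pow_add _ _ _
  have hyqj : (X 1 : R) ^ (q + j) = X 1 ^ q * X 1 ^ j := pow_add _ _ _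
  have huqk : ((X 0 : R) + X 1) ^ (q + k) = ((X 0 : R) + X 1) ^ q * ((X 0 : R) + X 1) ^ k :=
    pow_add _ _ _
  have hxqi' : (X 0 : R) ^ (q - i) * X 0 ^ i = X 0 ^ q := by
    rw [← pow_add, Nat.sub_add_cancel hi]
  have hyqj' : (X 1 : R) ^ (q - j) * X 1 ^ j = X 1 ^ q := by
    rw [← pow_add, Nat.sub_add_cancel hj]
  constructor
  · intro hz
    obtain ⟨α, β, γ, rfl⟩ := mem_span_triple.mp hz
    refine mem_span_triple.mpr
      ⟨α * X 0 ^ (q - i) + β * X 1 ^ j, β * X 0 ^ i - α * X 1 ^ (q - j), γ, ?_⟩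
    rw [hxqi, hyqj, huqk, hu, hv]
    rw [← hxqi', ← hyqj']
    ring
  · intro hz
    obtain ⟨α, β, γ, hrep⟩ := mem_span_triple.mp hz
    have hw : (z - γ * ((X 0 : R) + X 1) ^ k) * ((X 0 : R) + X 1) ^ q
        = α * (X 0 ^ q * X 0 ^ i) + β * (X 1 ^ q * X 1 ^ j) := by
      linear_combination hrep + α * hxqi + β * hyqj + γ * huqk
    have hkey1 : (X 0 : R) ^ q * ((z - γ * ((X 0 : R) + X 1) ^ k) - α * X 0 ^ i)
        = (X 1 : R) ^ q * (β * X 1 ^ j - (z - γ * ((X 0 : R) + X 1) ^ k)) := by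
      linear_combination hw - (z - γ * ((X 0 : R) + X 1) ^ k) * hu
    have hyprime : Prime ((X 1 : R)) := prime_Y
    have hndvdx : ¬ ((X 1 : R) ∣ (X 0 : R) ^ q) := by
      intro hd; exact not_dvd_y_x (hyprime.dvd_of_dvd_pow hd)
    have hdvd2 : (X 1 : R) ^ q ∣ ((z - γ * ((X 0 : R) + X 1) ^ k) - α * X 0 ^ i) :=
      hyprime.pow_dvd_of_dvd_mul_left q hndvdx
        ⟨β * X 1 ^ j - (z - γ * ((X 0 : R) + X 1) ^ k), hkey1⟩
    obtain ⟨δ, hδ⟩ := hdvd2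
    have hyne : ((X 1 : R)) ^ q ≠ 0 := pow_ne_zero _ hyprime.ne_zero
    have hcancel2 : β * X 1 ^ j - (z - γ * ((X 0 : R) + X 1) ^ k) = (X 0 : R) ^ q * δ := by
      apply mul_left_cancel₀ hyne
      calc (X 1 : R) ^ q * (β * X 1 ^ j - (z - γ * ((X 0 : R) + X 1) ^ k))
          = (X 0 : R) ^ q * ((z - γ * ((X 0 : R) + X 1) ^ k) - α * X 0 ^ i) := hkey1.symm
        _ = (X 0 : R) ^ q * ((X 1 : R) ^ q * δ) := by rw [hδ]
        _ = (X 1 : R) ^ q * ((X 0 : R) ^ q * δ) := by ring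
    have h5 : β * (X 1 : R) ^ j - α * X 0 ^ i = ((X 0 : R) + X 1) ^ q * δ := by
      linear_combination hcancel2 + hδ - δ * hu
    have hfac : (X 0 : R) ^ i * (α + (X 0 : R) ^ (q - i) * δ)
        = (X 1 : R) ^ j * (β - (X 1 : R) ^ (q - j) * δ) := by
      linear_combination -h5 + δ * hxqi' + δ * hyqj' - δ * hu
    have hndvdxi : ¬ ((X 1 : R) ∣ (X 0 : R) ^ i) := by
      intro hd; exact not_dvd_y_x (hyprime.dvd_of_dvd_pow hd)
    have hdvd3 : (X 1 : R) ^ j ∣ (α + (X 0 : R) ^ (q - i) * δ) :=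
      hyprime.pow_dvd_of_dvd_mul_left j hndvdxi
        ⟨β - (X 1 : R) ^ (q - j) * δ, hfac.symm ▸ hfac⟩
    obtain ⟨ε, hε⟩ := hdvd3
    refine mem_span_triple.mpr ⟨-δ, ε, γ, ?_⟩
    linear_combination hδ + (X 0 : R) ^ i * hε + δ * hv - δ * hxqi'

lemma colon_Kid (e q : ℕ) (hq : q = 3 ^ e) (i j k : ℕ) (hi : i ≤ q) (hj : j ≤ q) (hk : k ≤ q)
    (z : R) :
    z ∈ Ideal.span {(X 0 : R) ^ (q - i), (X 1 : R) ^ j, ((X 0 : R) + X 1) ^ k}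
      ↔ (X 0 : R) ^ i * z ∈ Ideal.span
          {((X 0 : R) - X 1) ^ q, (X 0 : R) ^ i * (X 1 : R) ^ j, ((X 0 : R) + X 1) ^ k} := by
  obtain ⟨hu, hv⟩ := char3_facts (K := K) e q hq
  have h3' : ((3 : ℕ) : R) = 0 := three_eq_zero
  have hxqi' : (X 0 : R) ^ (q - i) * X 0 ^ i = X 0 ^ q := by
    rw [← pow_add, Nat.sub_add_cancel hi]
  have huqk' : ((X 0 : R) + X 1) ^ (q - k) * ((X 0 : R) + X 1) ^ k = ((X 0 : R) + X 1) ^ q := by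
    rw [← pow_add, Nat.sub_add_cancel hk]
  constructor
  · intro hz
    obtain ⟨α, β, γ, rfl⟩ := mem_span_triple.mp hz
    refine mem_span_triple.mpr
      ⟨-α, β, γ * X 0 ^ i - α * ((X 0 : R) + X 1) ^ (q - k), ?_⟩
    linear_combination α * hxqi' + α * hv + α * huqk' + α * hu + α * (X 0 : R) ^ q * h3'
  · intro hz
    obtain ⟨α, β, γ, hrep⟩ := mem_span_triple.mp hz
    have hw2 : (X 0 : R) ^ q * (z - β * X 1 ^ j)
        = α * ((X 0 : R) ^ (q - i) * ((X 0 : R) - X 1) ^ q)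
          + γ * ((X 0 : R) ^ (q - i) * ((X 0 : R) + X 1) ^ k) := by
      linear_combination (X 0 : R) ^ (q - i) * hrep - (z - β * X 1 ^ j) * hxqi'
    have hkey : ((X 0 : R) - X 1) ^ q * (-(z - β * X 1 ^ j) - α * (X 0 : R) ^ (q - i))
        = ((X 0 : R) + X 1) ^ k * (γ * (X 0 : R) ^ (q - i)
            + (z - β * X 1 ^ j) * ((X 0 : R) + X 1) ^ (q - k)) := by
      linear_combination hw2 - (z - β * X 1 ^ j) * hv - (z - β * X 1 ^ j) * huqk'
        - (z - β * X 1 ^ j) * hu - (z - β * X 1 ^ j) * (X 0 : R) ^ q * h3'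
    have huprime : Prime ((X 0 : R) + X 1) := prime_U
    have hndvdv : ¬ (((X 0 : R) + X 1) ∣ ((X 0 : R) - X 1) ^ q) := by
      intro hd; exact not_dvd_u_v (huprime.dvd_of_dvd_pow hd)
    have hdvd : ((X 0 : R) + X 1) ^ k ∣ (-(z - β * X 1 ^ j) - α * (X 0 : R) ^ (q - i)) :=
      huprime.pow_dvd_of_dvd_mul_left k hndvdv
        ⟨γ * (X 0 : R) ^ (q - i) + (z - β * X 1 ^ j) * ((X 0 : R) + X 1) ^ (q - k), hkey⟩
    obtain ⟨δ, hδ⟩ := hdvd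
    refine mem_span_triple.mpr ⟨-α, β, -δ, ?_⟩
    linear_combination -hδ

end CharThree

end Main


/-- Han's recursion for the kernel function of `T₁+T₂` in characteristic `3` at integer
arguments: for `q` a power of `3` and `0 ≤ i, j, k ≤ q`,
`D(q+i, q+j, q+k) = D(q-i, j, k) + q² + ik + ij`, where at integer arguments
`D(a,b,c) = dim_K (K[x,y]/(x^a, y^b, (x+y)^c))`. -/
theorem kernel_function_char_three_recursion
    (K : Type*) [Field K] [CharP K 3]
    (e : ℕ) (q : ℕ) (hq : q = 3 ^ e)
    (i j k : ℕ) (hi : i ≤ q) (hj : j ≤ q) (hk : k ≤ q) :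
    Module.finrank K (MvPolynomial (Fin 2) K ⧸ Ideal.span
        {(MvPolynomial.X 0 : MvPolynomial (Fin 2) K) ^ (q + i),
          MvPolynomial.X 1 ^ (q + j),
          (MvPolynomial.X 0 + MvPolynomial.X 1) ^ (q + k)}) =
      Module.finrank K (MvPolynomial (Fin 2) K ⧸ Ideal.span
        {(MvPolynomial.X 0 : MvPolynomial (Fin 2) K) ^ (q - i),
          MvPolynomial.X 1 ^ j,
          (MvPolynomial.X 0 + MvPolynomial.X 1) ^ k}) + q ^ 2 + i * k + i * j := by
  obtain ⟨hu, hv⟩ := char3_facts (K := K) e q hq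
  have h3' : ((3 : ℕ) : MvPolynomial (Fin 2) K) = 0 := three_eq_zero
  have hxqi' : (X 0 : MvPolynomial (Fin 2) K) ^ (q - i) * X 0 ^ i = X 0 ^ q := by
    rw [← pow_add, Nat.sub_add_cancel hi]
  have hyqj' : (X 1 : MvPolynomial (Fin 2) K) ^ (q - j) * X 1 ^ j = X 1 ^ q := by
    rw [← pow_add, Nat.sub_add_cancel hj]
  have huqk' : ((X 0 : MvPolynomial (Fin 2) K) + X 1) ^ (q - k) * ((X 0 : MvPolynomial (Fin 2) K) + X 1) ^ k
      = ((X 0 : MvPolynomial (Fin 2) K) + X 1) ^ q := by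
    rw [← pow_add, Nat.sub_add_cancel hk]
  set x : MvPolynomial (Fin 2) K := X 0 with hx
  set y : MvPolynomial (Fin 2) K := X 1 with hy
  -- the three main ideals
  set Ibig : Ideal (MvPolynomial (Fin 2) K) :=
    Ideal.span {x ^ (q + i), y ^ (q + j), (x + y) ^ (q + k)} with hIbig
  set A : Ideal (MvPolynomial (Fin 2) K) :=
    Ideal.span {x ^ (q + i), y ^ (q + j), (x + y) ^ q} with hA
  set Kid : Ideal (MvPolynomial (Fin 2) K) :=
    Ideal.span {(x - y) ^ q, x ^ i * y ^ j, (x + y) ^ k} with hKid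
  have hxqA : x ^ (q + i) ∈ A := Ideal.subset_span (by simp)
  have hyqA : y ^ (q + j) ∈ A := Ideal.subset_span (by simp)
  have huqA : (x + y) ^ q ∈ A := Ideal.subset_span (by simp)
  have hxqI : x ^ (q + i) ∈ Ibig := Ideal.subset_span (by simp)
  have hyqI : y ^ (q + j) ∈ Ibig := Ideal.subset_span (by simp)
  have hukI : (x + y) ^ (q + k) ∈ Ibig := Ideal.subset_span (by simp)
  -- finite dimensionality
  haveI fd1 : FiniteDimensional K (MvPolynomial (Fin 2) K ⧸ Ibig) :=
    finiteDimensional_of_pows_mem Ibig (q + i) (q + j) hxqI hyqI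
  haveI fd2 : FiniteDimensional K (MvPolynomial (Fin 2) K ⧸ A) :=
    finiteDimensional_of_pows_mem A (q + i) (q + j) hxqA hyqA
  -- x^q and y^q are in Kid
  have hvK : (x - y) ^ q ∈ Kid := Ideal.subset_span (by simp)
  have hxyK : x ^ i * y ^ j ∈ Kid := Ideal.subset_span (by simp)
  have hukK : (x + y) ^ k ∈ Kid := Ideal.subset_span (by simp)
  have hxqK : x ^ q ∈ Kid := by
    refine mem_span_triple.mpr ⟨-1, 0, -((x + y) ^ (q - k)), ?_⟩
    linear_combination hv + huqk' + hu + (x : MvPolynomial (Fin 2) K) ^ q * h3'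
  have hyqK : y ^ q ∈ Kid := by
    refine mem_span_triple.mpr ⟨1, 0, -((x + y) ^ (q - k)), ?_⟩
    linear_combination -hv + huqk' + hu + (y : MvPolynomial (Fin 2) K) ^ q * h3'
  haveI fd3 : FiniteDimensional K (MvPolynomial (Fin 2) K ⧸ Kid) :=
    finiteDimensional_of_pows_mem Kid q q hxqK hyqK
  -- Step 1 : ℓ(Ibig) = ℓ(A) + ℓ(Kid)
  have step1 : Module.finrank K (MvPolynomial (Fin 2) K ⧸ Ibig)
      = Module.finrank K (MvPolynomial (Fin 2) K ⧸ A)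
        + Module.finrank K (MvPolynomial (Fin 2) K ⧸ Kid) := by
    refine finrank_quotient_additive Ibig A Kid ((x + y) ^ q) ?_ ?_
    · apply le_antisymm
      · rw [hA, Ideal.span_le]
        rintro z hz
        simp only [Set.mem_insert_iff, Set.mem_singleton_iff] at hz
        rcases hz with rfl | rfl | rfl
        · exact Submodule.mem_sup_left hxqI
        · exact Submodule.mem_sup_left hyqI
        · exact Submodule.mem_sup_right (Ideal.subset_span rfl)
      · apply sup_le
        · rw [hIbig, Ideal.span_le]
          rintro z hz
          simp only [Set.mem_insert_iff, Set.mem_singleton_iff] at hz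
          rcases hz with rfl | rfl | rfl
          · exact hxqA
          · exact hyqA
          · have : (x + y) ^ (q + k) = (x + y) ^ k * (x + y) ^ q := by
              rw [← pow_add]; ring_nf
            rw [this]
            exact Ideal.mul_mem_left _ _ huqA
        · rw [Ideal.span_le]
          rintro z hz
          simp only [Set.mem_singleton_iff] at hz
          subst hz
          exact huqA
    · intro z
      exact colon_I e q hq i j k hi hj hk z
  -- Step 2 : ℓ(A) = q² + ij
  have step2 : Module.finrank K (MvPolynomial (Fin 2) K ⧸ A) = q * q + i * j := by
    have := finrank_quotient_additive A
      (Ideal.span {x ^ q, y ^ q}) (Ideal.span {x ^ i, y ^ j}) (x ^ q) ?_ ?_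
    · rw [this, finrank_span_pair_monomial, finrank_span_pair_monomial]
    · apply le_antisymm
      · rw [Ideal.span_le]
        rintro z hz
        simp only [Set.mem_insert_iff, Set.mem_singleton_iff] at hz
        rcases hz with rfl | rfl
        · exact Submodule.mem_sup_right (Ideal.subset_span rfl)
        · have hyq : y ^ q = (x + y) ^ q - x ^ q := by linear_combination -hu
          rw [hyq]
          exact Submodule.sub_mem _ (Submodule.mem_sup_left huqA)
            (Submodule.mem_sup_right (Ideal.subset_span rfl))
      · apply sup_le
        · rw [hA, Ideal.span_le]
          rintro z hz
          simp only [Set.mem_insert_iff, Set.mem_singleton_iff] at hz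
          have hxm : x ^ q ∈ Ideal.span {x ^ q, y ^ q} := Ideal.subset_span (by simp)
          have hym : y ^ q ∈ Ideal.span {x ^ q, y ^ q} := Ideal.subset_span (by simp)
          rcases hz with rfl | rfl | rfl
          · have : x ^ (q + i) = x ^ i * x ^ q := by rw [← pow_add]; ring_nf
            rw [this]; exact Ideal.mul_mem_left _ _ hxm
          · have : y ^ (q + j) = y ^ j * y ^ q := by rw [← pow_add]; ring_nf
            rw [this]; exact Ideal.mul_mem_left _ _ hym
          · rw [hu]; exact Ideal.add_mem _ hxm hym
        · rw [Ideal.span_le]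
          rintro z hz
          simp only [Set.mem_singleton_iff] at hz
          subst hz
          exact Ideal.subset_span (by simp)
    · intro z
      exact colon_A e q hq i j hi hj z
  -- Step 3 : ℓ(Kid) = ik + Y
  have step3 : Module.finrank K (MvPolynomial (Fin 2) K ⧸ Kid)
      = i * k + Module.finrank K (MvPolynomial (Fin 2) K ⧸
          Ideal.span {x ^ (q - i), y ^ j, (x + y) ^ k}) := by
    have := finrank_quotient_additive Kid
      (Ideal.span {x ^ i, (x + y) ^ k})
      (Ideal.span {x ^ (q - i), y ^ j, (x + y) ^ k}) (x ^ i) ?_ ?_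
    · rw [this, finrank_span_x_u]
    · apply le_antisymm
      · rw [Ideal.span_le]
        rintro z hz
        simp only [Set.mem_insert_iff, Set.mem_singleton_iff] at hz
        rcases hz with rfl | rfl
        · exact Submodule.mem_sup_right (Ideal.subset_span rfl)
        · exact Submodule.mem_sup_left hukK
      · apply sup_le
        · rw [hKid, Ideal.span_le]
          rintro z hz
          simp only [Set.mem_insert_iff, Set.mem_singleton_iff] at hz
          have hxm : x ^ i ∈ Ideal.span {x ^ i, (x + y) ^ k} := Ideal.subset_span (by simp)
          have hum : (x + y) ^ k ∈ Ideal.span {x ^ i, (x + y) ^ k} :=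
            Ideal.subset_span (by simp)
          rcases hz with rfl | rfl | rfl
          · refine Ideal.mem_span_pair.mpr ⟨2 * x ^ (q - i), -((x + y) ^ (q - k)), ?_⟩
            linear_combination 2 * hxqi' - huqk' - hv - hu
          · exact Ideal.mul_mem_right _ _ hxm
          · exact hum
        · rw [Ideal.span_le]
          rintro z hz
          simp only [Set.mem_singleton_iff] at hz
          subst hz
          exact Ideal.subset_span (by simp)
    · intro z
      exact colon_Kid e q hq i j k hi hj hk z
  rw [step1, step2, step3]
  have : q ^ 2 = q * q := sq q
  omega
end

section
/- Let $k$ be a field of characteristic $p > 0$ and let $M_1, M_2$ be finite-length $k[T]$-modules on which $T$ acts nilpotently, with $T$ acting as $f_1$ on $M_1$ and $f_2$ on $M_2$. If $M_i \cong \bigoplus_j k[T]/(T^{a_{ij}})$, then the element $f_1\otimes 1 + 1\otimes f_2$ acts nilpotently on $M_1 \otimes_k M_2$, and the class of $M_1\otimes_k M_2$ as a $k[T]$-module under this action is the bilinear extension $B_\phi(\gamma_{M_1},\gamma_{M_2})$ with $\phi = T_1+T_2$, where $B_\phi(\delta_{a},\delta_{b})$ is the class of $k[T_1,T_2]/(T_1^a,T_2^b)$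 as a $k[\phi]$-module. -/
open scoped TensorProduct
open Polynomial MvPolynomial

noncomputable section HMaux

variable (K : Type*) [Field K]

abbrev HMA (a : ℕ) : Type _ := Polynomial K ⧸ Ideal.span {(Polynomial.X : Polynomial K) ^ a}

abbrev HMQ (a b : ℕ) : Type _ := MvPolynomial (Fin 2) K ⧸ Ideal.span
  {(MvPolynomial.X 0 : MvPolynomial (Fin 2) K) ^ a, MvPolynomial.X 1 ^ b}

variable (a b : ℕ)

instance HMmhc : MonoidHomClass (MvPolynomial (Fin 2) K →ₐ[K] HMA K a ⊗[K] HMA K b)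
    (MvPolynomial (Fin 2) K) (HMA K a ⊗[K] HMA K b) :=
  RingHomClass.toMonoidHomClass

/-- forward algebra map `Q a b → A a ⊗ A b`. -/
def HMfwd : HMQ K a b →ₐ[K] HMA K a ⊗[K] HMA K b :=
  Ideal.Quotient.liftₐ _
    (MvPolynomial.aeval
      ![(Ideal.Quotient.mk _ Polynomial.X : HMA K a) ⊗ₜ[K] 1,
        (1 : HMA K a) ⊗ₜ[K] (Ideal.Quotient.mk _ Polynomial.X : HMA K b)])
    (by
      intro x hx
      refine RingHom.mem_ker.mp (Ideal.span_le.mpr ?_ hx)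
      intro y hy
      simp only [Set.mem_insert_iff, Set.mem_singleton_iff] at hy
      rw [SetLike.mem_coe, RingHom.mem_ker]
      rcases hy with rfl | rfl
      · rw [map_pow, MvPolynomial.aeval_X, Matrix.cons_val_zero,
          Algebra.TensorProduct.tmul_pow, one_pow, ← map_pow,
          Ideal.Quotient.eq_zero_iff_mem.mpr (Ideal.mem_span_singleton_self _),
          TensorProduct.zero_tmul]
      · rw [map_pow, MvPolynomial.aeval_X, Matrix.cons_val_one, Matrix.cons_val_zero,
          Algebra.TensorProduct.tmul_pow, one_pow, ← map_pow,
          Ideal.Quotient.eq_zero_iff_mem.mpr (Ideal.mem_span_singleton_self _),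
          TensorProduct.tmul_zero])

def HMg₁ : HMA K a →ₐ[K] HMQ K a b :=
  Ideal.Quotient.liftₐ _
    (Polynomial.aeval (Ideal.Quotient.mk _ (MvPolynomial.X 0) : HMQ K a b))
    (by
      intro x hx
      rw [Ideal.mem_span_singleton] at hx
      obtain ⟨c, rfl⟩ := hx
      rw [map_mul, map_pow, Polynomial.aeval_X, ← map_pow,
        Ideal.Quotient.eq_zero_iff_mem.mpr (Ideal.subset_span (by simp)), zero_mul])

def HMg₂ : HMA K b →ₐ[K] HMQ K a b :=
  Ideal.Quotient.liftₐ _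
    (Polynomial.aeval (Ideal.Quotient.mk _ (MvPolynomial.X 1) : HMQ K a b))
    (by
      intro x hx
      rw [Ideal.mem_span_singleton] at hx
      obtain ⟨c, rfl⟩ := hx
      rw [map_mul, map_pow, Polynomial.aeval_X, ← map_pow,
        Ideal.Quotient.eq_zero_iff_mem.mpr (Ideal.subset_span (by simp)), zero_mul])

def HMbwd : HMA K a ⊗[K] HMA K b →ₐ[K] HMQ K a b :=
  Algebra.TensorProduct.lift (HMg₁ K a b) (HMg₂ K a b) (fun _ _ => Commute.all _ _)

lemma HMfwd_mk (x : MvPolynomial (Fin 2) K) :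
    HMfwd K a b (Ideal.Quotient.mk _ x) = MvPolynomial.aeval
      ![(Ideal.Quotient.mk _ Polynomial.X : HMA K a) ⊗ₜ[K] 1,
        (1 : HMA K a) ⊗ₜ[K] (Ideal.Quotient.mk _ Polynomial.X : HMA K b)] x := rfl

lemma HMg₁_mk (x : Polynomial K) :
    HMg₁ K a b (Ideal.Quotient.mk _ x) =
      Polynomial.aeval (Ideal.Quotient.mk _ (MvPolynomial.X 0) : HMQ K a b) x := rfl

lemma HMg₂_mk (x : Polynomial K) :
    HMg₂ K a b (Ideal.Quotient.mk _ x) =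
      Polynomial.aeval (Ideal.Quotient.mk _ (MvPolynomial.X 1) : HMQ K a b) x := rfl

/-- The algebra iso. -/
def HMequiv : HMQ K a b ≃ₐ[K] HMA K a ⊗[K] HMA K b :=
  AlgEquiv.ofAlgHom (HMfwd K a b) (HMbwd K a b)
    (by
      apply Algebra.TensorProduct.ext
      · apply Ideal.Quotient.algHom_ext
        apply Polynomial.algHom_ext
        simp [HMfwd_mk, HMbwd, HMg₁_mk, Ideal.Quotient.mkₐ_eq_mk]
      · apply Ideal.Quotient.algHom_ext
        apply Polynomial.algHom_ext
        simp [HMfwd_mk, HMbwd, HMg₂_mk, Ideal.Quotient.mkₐ_eq_mk])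
    (by
      apply Ideal.Quotient.algHom_ext
      apply MvPolynomial.algHom_ext
      intro i
      fin_cases i <;>
        simp [HMfwd_mk, HMbwd, HMg₁_mk, HMg₂_mk, Ideal.Quotient.mkₐ_eq_mk])

lemma HMequiv_symm_X0 (t : HMA K a ⊗[K] HMA K b) :
    (HMequiv K a b).symm (((Ideal.Quotient.mk _ Polynomial.X : HMA K a) ⊗ₜ[K] 1) * t)
      = Ideal.Quotient.mk _ (MvPolynomial.X 0) * (HMequiv K a b).symm t := by
  rw [map_mul]
  congr 1
  apply (HMequiv K a b).injective
  rw [AlgEquiv.apply_symm_apply]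
  simp [HMequiv, HMfwd_mk]

lemma HMequiv_symm_X1 (t : HMA K a ⊗[K] HMA K b) :
    (HMequiv K a b).symm (((1 : HMA K a) ⊗ₜ[K] (Ideal.Quotient.mk _ Polynomial.X : HMA K b)) * t)
      = Ideal.Quotient.mk _ (MvPolynomial.X 1) * (HMequiv K a b).symm t := by
  rw [map_mul]
  congr 1
  apply (HMequiv K a b).injective
  rw [AlgEquiv.apply_symm_apply]
  simp [HMequiv, HMfwd_mk]


variable {ι₁ ι₂ : Type*} [Fintype ι₁] [Fintype ι₂]

def HMuncurry (C : ι₁ → ι₂ → Type*) [∀ i j, AddCommGroup (C i j)]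
    [∀ i j, Module K (C i j)] :
    (∀ j i, C i j) ≃ₗ[K] ∀ p : ι₁ × ι₂, C p.1 p.2 where
  toFun f p := f p.2 p.1
  map_add' _ _ := rfl
  map_smul' _ _ := rfl
  invFun g j i := g (i, j)
  left_inv _ := rfl
  right_inv _ := rfl

def HMpiTensor [DecidableEq ι₁] [DecidableEq ι₂] (A : ι₁ → Type*) (B : ι₂ → Type*)
    [∀ i, AddCommGroup (A i)] [∀ i, Module K (A i)]
    [∀ j, AddCommGroup (B j)] [∀ j, Module K (B j)] :
    ((∀ i, A i) ⊗[K] (∀ j, B j)) ≃ₗ[K] ∀ p : ι₁ × ι₂, A p.1 ⊗[K] B p.2 :=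
  ((TensorProduct.piRight K K _ B).trans
    ((LinearEquiv.piCongrRight fun j =>
      (TensorProduct.comm K _ (B j)).trans
        ((TensorProduct.piRight K K (B j) A).trans
          (LinearEquiv.piCongrRight fun i => TensorProduct.comm K (B j) (A i)))))).trans
    (HMuncurry K _)

@[simp] lemma HMpiTensor_tmul [DecidableEq ι₁] [DecidableEq ι₂] (A : ι₁ → Type*) (B : ι₂ → Type*)
    [∀ i, AddCommGroup (A i)] [∀ i, Module K (A i)]
    [∀ j, AddCommGroup (B j)] [∀ j, Module K (B j)]
    (u : ∀ i, A i) (v : ∀ j, B j) (p : ι₁ × ι₂) :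
    HMpiTensor K A B (u ⊗ₜ[K] v) p = u p.1 ⊗ₜ[K] v p.2 := by
  simp [HMpiTensor, HMuncurry, TensorProduct.piRight_apply, TensorProduct.piRightHom_tmul]

end HMaux


open scoped TensorProduct
set_option maxHeartbeats 1000000 in
set_option synthInstance.maxHeartbeats 100000 in
/-- Han–Monsky tensor rule: if `M₁, M₂` are finite-length `k[T]`-modules with `T` acting
nilpotently as `f₁` resp. `f₂`, and `Mᵢ ≅ ⊕_j k[T]/(T^{aᵢⱼ})` compatibly with the `T`-action,
then `f₁ ⊗ 1 + 1 ⊗ f₂` acts nilpotently on `M₁ ⊗_k M₂` and, as a module over this operator,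
`M₁ ⊗_k M₂` is isomorphic to the bilinear extension
`⊕_{j₁,j₂} k[T₁,T₂]/(T₁^{a₁ⱼ₁}, T₂^{a₂ⱼ₂})` with `T` acting as multiplication by `T₁+T₂`. -/
theorem hanMonsky_tensor_rule
    (K : Type*) [Field K]
    (M₁ M₂ : Type*) [AddCommGroup M₁] [Module K M₁] [AddCommGroup M₂] [Module K M₂]
    (f₁ : M₁ →ₗ[K] M₁) (f₂ : M₂ →ₗ[K] M₂)
    (hn₁ : IsNilpotent f₁) (hn₂ : IsNilpotent f₂)
    (ι₁ ι₂ : Type*) [Fintype ι₁] [Fintype ι₂]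
    (a₁ : ι₁ → ℕ) (a₂ : ι₂ → ℕ)
    (e₁ : M₁ ≃ₗ[K] ∀ j : ι₁, Polynomial K ⧸ Ideal.span {(Polynomial.X : Polynomial K) ^ a₁ j})
    (he₁ : ∀ (m : M₁) (j : ι₁),
      e₁ (f₁ m) j = Ideal.Quotient.mk _ (Polynomial.X : Polynomial K) * e₁ m j)
    (e₂ : M₂ ≃ₗ[K] ∀ j : ι₂, Polynomial K ⧸ Ideal.span {(Polynomial.X : Polynomial K) ^ a₂ j})
    (he₂ : ∀ (m : M₂) (j : ι₂),
      e₂ (f₂ m) j = Ideal.Quotient.mk _ (Polynomial.X : Polynomial K) * e₂ m j)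
    (Φ : M₁ ⊗[K] M₂ →ₗ[K] M₁ ⊗[K] M₂)
    (hΦ : Φ = TensorProduct.map f₁ (LinearMap.id : M₂ →ₗ[K] M₂) +
      TensorProduct.map (LinearMap.id : M₁ →ₗ[K] M₁) f₂) :
    IsNilpotent Φ ∧
    ∃ E : (M₁ ⊗[K] M₂) ≃ₗ[K]
        ∀ j : ι₁ × ι₂, MvPolynomial (Fin 2) K ⧸ Ideal.span
          {(MvPolynomial.X 0 : MvPolynomial (Fin 2) K) ^ a₁ j.1,
            MvPolynomial.X 1 ^ a₂ j.2},
      ∀ (z : M₁ ⊗[K] M₂) (j : ι₁ × ι₂),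
        E (Φ z) j = Ideal.Quotient.mk _ (MvPolynomial.X 0 + MvPolynomial.X 1) * E z j := by
  classical
  constructor
  · -- nilpotency
    have h1 : IsNilpotent (TensorProduct.map f₁ (LinearMap.id : M₂ →ₗ[K] M₂)) := by
      obtain ⟨n, hn⟩ := hn₁
      refine ⟨n, ?_⟩
      rw [TensorProduct.map_pow]
      ext m₁ m₂
      simp [hn]
    have h2 : IsNilpotent (TensorProduct.map (LinearMap.id : M₁ →ₗ[K] M₁) f₂) := by
      obtain ⟨n, hn⟩ := hn₂
      refine ⟨n, ?_⟩
      rw [TensorProduct.map_pow]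
      ext m₁ m₂
      simp [hn]
    have hc : Commute (TensorProduct.map f₁ (LinearMap.id : M₂ →ₗ[K] M₂))
        (TensorProduct.map (LinearMap.id : M₁ →ₗ[K] M₁) f₂) := by
      show _ * _ = _ * _
      ext m₁ m₂
      simp [Module.End.mul_apply]
    rw [hΦ]
    exact hc.isNilpotent_add h1 h2
  · -- the equivalence
    refine ⟨(TensorProduct.congr e₁ e₂).trans
      ((HMpiTensor K _ _).trans
        (LinearEquiv.piCongrRight fun p : ι₁ × ι₂ =>
          (HMequiv K (a₁ p.1) (a₂ p.2)).symm.toLinearEquiv)), ?_⟩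
    intro z
    induction z using TensorProduct.induction_on with
    | zero => intro p; simp only [map_zero, Pi.zero_apply, mul_zero]
    | add x y hx hy =>
      intro p
      simp only [map_add, Pi.add_apply]
      rw [hx p, hy p, mul_add]
      simp only [map_add]
    | tmul u v =>
      intro p
      rw [hΦ]
      simp only [LinearMap.add_apply, TensorProduct.map_tmul, LinearMap.id_coe, id_eq,
        map_add, Pi.add_apply, LinearEquiv.trans_apply, TensorProduct.congr_tmul,
        HMpiTensor_tmul, LinearEquiv.piCongrRight_apply, AlgEquiv.toLinearEquiv_apply]
      rw [he₁, he₂]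
      have h0 : (Ideal.Quotient.mk (Ideal.span {(Polynomial.X : Polynomial K) ^ a₁ p.1})
            Polynomial.X * e₁ u p.1) ⊗ₜ[K] e₂ v p.2
          = ((Ideal.Quotient.mk _ Polynomial.X : HMA K (a₁ p.1)) ⊗ₜ[K] 1) *
            (e₁ u p.1 ⊗ₜ[K] e₂ v p.2) := by
        rw [Algebra.TensorProduct.tmul_mul_tmul, one_mul]
      have h1 : (e₁ u p.1) ⊗ₜ[K] (Ideal.Quotient.mk (Ideal.span
            {(Polynomial.X : Polynomial K) ^ a₂ p.2}) Polynomial.X * e₂ v p.2)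
          = ((1 : HMA K (a₁ p.1)) ⊗ₜ[K]
              (Ideal.Quotient.mk _ Polynomial.X : HMA K (a₂ p.2))) *
            (e₁ u p.1 ⊗ₜ[K] e₂ v p.2) := by
        rw [Algebra.TensorProduct.tmul_mul_tmul, one_mul]
      rw [h0, h1, HMequiv_symm_X0, HMequiv_symm_X1, add_mul]
end
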